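/- arXiv:1608.00259 — 3 statements merged into one kernel-verified Lean document; each statement's English description precedes it below -/
import Mathlib

section
/- Let G be a finite group of even order with d(G) ≥ 4. Then the nim-number of the achievement game GEN(G) is 0. -/
/-- An *intersection subgroup* of `G`: an intersection of a nonempty
collection of maximal subgroups of `G`. -/
def IsIntersectionSubgroup {G : Type*} [Group G] (I : Subgroup G) : Prop :=
  ∃ 𝒩 : Set (Subgroup G), 𝒩.Nonempty ∧ (∀ M ∈ 𝒩, IsCoatom M) ∧ I = sInf 𝒩

/-- `⌈P⌉`: the intersection of all maximal subgroups of `G` containing `P`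
(the smallest intersection subgroup containing a non-generating set `P`). -/
def interCeil {G : Type*} [Group G] (P : Set G) : Subgroup G :=
  sInf {M : Subgroup G | IsCoatom M ∧ P ⊆ (M : Set G)}

/-- The *deficiency* `δ(P)` of a subset `P ⊆ G`: the minimum size of a
finite subset `Q ⊆ G` with `⟨P ∪ Q⟩ = G`. -/
noncomputable def deficiency {G : Type*} [Group G] (P : Set G) : ℕ :=
  sInf {n : ℕ | ∃ Q : Finset G, Q.card = n ∧ Subgroup.closure (P ∪ ↑Q) = ⊤}

/-- `d(G)`: the minimum size of a generating set of `G`. -/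
noncomputable def minGen (G : Type*) [Group G] : ℕ :=
  sInf {n : ℕ | ∃ S : Finset G, S.card = n ∧ Subgroup.closure (S : Set G) = ⊤}

open Classical in
/-- The nim-number of a position `P` in the achievement game `GEN(G)`:
positions generating `G` are terminal (they have no options, so their
nim-number is `mex ∅ = 0`); the options of a non-generating position `P`
are the positions `P ∪ {g}` for `g ∈ G \ P`, and
`nim(P) = mex {nim(P ∪ {g}) | g ∈ G \ P}` is the least natural number
that is not the nim-number of an option of `P`. -/
noncomputable def gameNim {G : Type*} [Group G] [Fintype G] (P : Set G) : ℕ :=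
  if Subgroup.closure P = ⊤ then 0
  else sInf {n : ℕ | ∀ g ∉ P, n ≠ gameNim (insert g P)}
termination_by Fintype.card G - P.ncard
decreasing_by
  have h1 : (insert g P).ncard = P.ncard + 1 :=
    Set.ncard_insert_of_notMem ‹g ∉ P› (Set.toFinite P)
  have h2 : (insert g P).ncard ≤ Fintype.card G := by
    have := Set.ncard_le_ncard (Set.subset_univ (insert g P)) (Set.toFinite _)
    simpa [Set.ncard_univ, Nat.card_eq_fintype_card] using this
  omega

section Aux
variable {G : Type*} [Group G] [Fintype G]

lemma mexSet_nonempty (P : Set G) :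
    {n : ℕ | ∀ g ∉ P, n ≠ gameNim (insert g P)}.Nonempty := by
  refine ⟨(Finset.univ.sup fun g : G => gameNim (insert g P)) + 1, fun g _ e => ?_⟩
  have : gameNim (insert g P) ≤ Finset.univ.sup fun g : G => gameNim (insert g P) := by
    simpa using Finset.le_sup (f := fun g : G => gameNim (insert g P)) (Finset.mem_univ g)
  omega

lemma gameNim_of_top {P : Set G} (hP : Subgroup.closure P = ⊤) : gameNim P = 0 := by
  rw [gameNim.eq_def, if_pos hP]

lemma gameNim_eq_zero_iff {P : Set G} (hP : Subgroup.closure P ≠ ⊤) :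
    gameNim P = 0 ↔ ∀ g ∉ P, gameNim (insert g P) ≠ 0 := by
  conv_lhs => rw [gameNim.eq_def, if_neg hP]
  rw [Nat.sInf_eq_zero]
  constructor
  · rintro (h0 | hemp)
    · exact fun g hg e => h0 g hg e.symm
    · exact absurd hemp (mexSet_nonempty P).ne_empty
  · exact fun h => Or.inl fun g hg e => h g hg e.symm

omit [Fintype G] in
lemma closure_insert_of_mem {h : G} {Q : Set G} (hh : h ∈ Subgroup.closure Q) :
    Subgroup.closure (insert h Q) = Subgroup.closure Q := by
  refine le_antisymm ?_ (Subgroup.closure_mono (Set.subset_insert _ _))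
  rw [Subgroup.closure_le]
  rintro x (rfl | hx)
  · exact hh
  · exact Subgroup.subset_closure hx

omit [Fintype G] in
lemma subgroup_ncard_even {H : Subgroup G} {t : G} (ht : t ∈ H)
    (ht1 : t * t = 1) (ht2 : t ≠ 1) : Even ((H : Set G).ncard) := by
  have h2 : orderOf (⟨t, ht⟩ : H) = 2 := by
    refine orderOf_eq_prime ?_ ?_
    · ext; simpa [pow_two] using ht1
    · exact fun e => ht2 (by simpa using congrArg Subtype.val e)
  have hdvd : 2 ∣ Nat.card H := h2 ▸ orderOf_dvd_natCard (⟨t, ht⟩ : H)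
  have : Nat.card H = (H : Set G).ncard := Nat.card_coe_set_eq (H : Set G)
  rw [← this]
  exact even_iff_two_dvd.mpr hdvd

lemma keyA (t : G) (ht1 : t * t = 1) (ht2 : t ≠ 1) (P : Set G) (htP : t ∈ P)
    (hP : Subgroup.closure P ≠ ⊤)
    (hA : ∀ g : G, Subgroup.closure (insert g P) ≠ ⊤)
    (hev : Even P.ncard) : gameNim P = 0 := by
  rw [gameNim_eq_zero_iff hP]
  intro g hg
  set Q : Set G := insert g P with hQ
  rw [Ne, gameNim_eq_zero_iff (hA g)]
  push_neg
  by_cases hterm : ∃ x, Subgroup.closure (insert x Q) = ⊤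
  · obtain ⟨x, hx⟩ := hterm
    have hxQ : x ∉ Q := fun hxQ => (hA g) (by rwa [Set.insert_eq_of_mem hxQ] at hx)
    exact ⟨x, hxQ, gameNim_of_top hx⟩
  · push_neg at hterm
    have hQodd : ¬ Even Q.ncard := by
      rw [hQ, Set.ncard_insert_of_notMem hg (Set.toFinite P)]
      simpa [Nat.even_add_one] using hev
    have hne : ∃ h : G, h ∈ Subgroup.closure Q ∧ h ∉ Q := by
      by_contra hcon
      push_neg at hcon
      have hQeq : Q = (Subgroup.closure Q : Set G) :=
        le_antisymm Subgroup.subset_closure hcon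
      have : Even Q.ncard := by
        rw [hQeq]
        exact subgroup_ncard_even (Subgroup.subset_closure (Set.mem_insert_iff.mpr
          (Or.inr htP))) ht1 ht2
      exact hQodd this
    obtain ⟨h, hhcl, hhQ⟩ := hne
    refine ⟨h, hhQ, ?_⟩
    have hlt : Fintype.card G - (insert h Q).ncard < Fintype.card G - P.ncard := by
      have e1 : Q.ncard = P.ncard + 1 := Set.ncard_insert_of_notMem hg (Set.toFinite P)
      have e2 : (insert h Q).ncard = Q.ncard + 1 :=
        Set.ncard_insert_of_notMem hhQ (Set.toFinite Q)
      have e3 : (insert h Q).ncard ≤ Fintype.card G := by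
        have := Set.ncard_le_ncard (Set.subset_univ (insert h Q)) (Set.toFinite _)
        simpa [Set.ncard_univ, Nat.card_eq_fintype_card] using this
      omega
    have hclR : Subgroup.closure (insert h Q) = Subgroup.closure Q :=
      closure_insert_of_mem hhcl
    refine keyA t ht1 ht2 (insert h Q)
      (Set.mem_insert_iff.mpr (Or.inr (Set.mem_insert_iff.mpr (Or.inr htP))))
      (by rw [hclR]; exact hA g) ?_ ?_
    · intro x
      have : Subgroup.closure (insert x (insert h Q)) = Subgroup.closure (insert x Q) := by
        rw [Set.insert_comm]
        exact closure_insert_of_mem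
          (Subgroup.closure_mono (Set.subset_insert x Q) hhcl)
      rw [this]
      exact hterm x
    · rw [Set.ncard_insert_of_notMem hhQ (Set.toFinite Q), hQ,
        Set.ncard_insert_of_notMem hg (Set.toFinite P)]
      simpa [Nat.even_add_one, parity_simps] using hev
termination_by Fintype.card G - P.ncard
decreasing_by
  exact hlt

omit [Fintype G] in
lemma small_not_top (hmin : 4 ≤ minGen G) (S : Finset G) (hS : S.card ≤ 3) :
    Subgroup.closure (S : Set G) ≠ ⊤ := by
  intro htop
  have : minGen G ≤ S.card := Nat.sInf_le ⟨S, rfl, htop⟩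
  omega

end Aux

/-- If `G` is a finite group of even order with `d(G) ≥ 4`, then the
nim-number of the achievement game `GEN(G)` is `0`. -/
theorem gameNim_of_even_of_four_le_minGen (G : Type*) [Group G] [Fintype G]
    (hG : Even (Nat.card G)) (h : 4 ≤ minGen G) :
    gameNim (∅ : Set G) = 0 := by
  classical
  have hnt : Nontrivial G := by
    have hpos : 0 < Nat.card G := Nat.card_pos
    have : 2 ≤ Nat.card G := by
      rcases hG with ⟨k, hk⟩; omega
    rw [Nat.card_eq_fintype_card] at this
    exact Fintype.one_lt_card_iff_nontrivial.mp this
  obtain ⟨t, htord⟩ : ∃ t : G, orderOf t = 2 := by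
    haveI : Fact (Nat.Prime 2) := ⟨Nat.prime_two⟩
    exact exists_prime_orderOf_dvd_card 2
      (by rwa [← Nat.card_eq_fintype_card, ← even_iff_two_dvd])
  have ht1 : t * t = 1 := by
    have := pow_orderOf_eq_one t
    rwa [htord, pow_two] at this
  have ht2 : t ≠ 1 := by
    intro e; rw [e, orderOf_one] at htord; omega
  have hbot : Subgroup.closure (∅ : Set G) ≠ ⊤ := by
    rw [Subgroup.closure_empty]
    exact bot_ne_top
  rw [gameNim_eq_zero_iff hbot]
  intro g _
  have h1g : Subgroup.closure (insert g (∅ : Set G)) ≠ ⊤ := by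
    have := small_not_top h {g} (by simp)
    simpa using this
  rw [Ne, gameNim_eq_zero_iff h1g]
  push_neg
  set u : G := if g = t then 1 else t with hu
  have hugt : u ∉ insert g (∅ : Set G) := by
    simp only [Set.mem_insert_iff, Set.mem_empty_iff_false, or_false]
    rcases eq_or_ne g t with rfl | hgt
    · simp [hu, ht2, eq_comm]
    · simp only [hu, if_neg hgt]
      intro e; exact hgt e.symm
  refine ⟨u, hugt, ?_⟩
  set P2 : Set G := insert u (insert g ∅) with hP2
  have hP2fin : P2 = (({u, g} : Finset G) : Set G) := by simp [hP2]
  have htmem : t ∈ P2 := by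
    rcases eq_or_ne g t with rfl | hgt
    · exact Set.mem_insert_iff.mpr (Or.inr (Set.mem_insert _ _))
    · have : u = t := by simp [hu, hgt]
      rw [← this]; exact Set.mem_insert _ _
  refine keyA t ht1 ht2 P2 htmem ?_ ?_ ?_
  · rw [hP2fin]
    exact small_not_top h _ (le_trans (Finset.card_insert_le _ _) (by simp))
  · intro x
    have hx : insert x P2 = ((insert x {u, g} : Finset G) : Set G) := by
      simp [hP2]
    rw [hx]
    refine small_not_top h _ ?_
    calc (insert x {u, g} : Finset G).card ≤ ({u, g} : Finset G).card + 1 :=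
          Finset.card_insert_le _ _
      _ ≤ 3 := by
          have := Finset.card_insert_le u ({g} : Finset G)
          simp at this ⊢; omega
  · have : P2.ncard = 2 := by
      rw [hP2, Set.ncard_insert_of_notMem hugt (Set.toFinite _)]
      simp
    rw [this]
    exact even_two
end

section
/- Let G = Dih(A) where A is a finite abelian group of odd order with d(A) = 2, let P be a subset of G that does not generate G, let I = ⌈P⌉ be the smallest intersection subgroup containing P, and suppose I has odd order. Then the nim-number of the position P in the achievement game GEN(G) is determined as follows: if δ(I) = 1, then nim(P) = 2 when |P| is even and nim(P) = 1 when |P| is odd; if δ(I) = 2, then nim(P) = 3 when |P| is even and nim(P) = 0 when |P| is odd; if δ(I) = 3, then nim(P) = 3 when |P| is even and nim(P) = 1 when |P| is odd. -/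
/-- The homomorphism `C₂ → Aut A` sending the nontrivial element of `C₂`
to the inversion automorphism `a ↦ a⁻¹` of the abelian group `A`. -/
def dihTwist (A : Type*) [CommGroup A] : Multiplicative (ZMod 2) →* MulAut A where
  toFun k := if (Multiplicative.toAdd k) = 0 then 1 else MulEquiv.inv A
  map_one' := by simp
  map_mul' := by
    intro a b
    have hinv : (MulEquiv.inv A) * (MulEquiv.inv A) = 1 := by
      ext x
      simp
    have hcases : ∀ x : ZMod 2, x = 0 ∨ x = 1 := by decide
    have h11 : (1 : ZMod 2) + 1 = 0 := by decide
    have hab : Multiplicative.toAdd (a * b)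
        = Multiplicative.toAdd a + Multiplicative.toAdd b := rfl
    rcases hcases (Multiplicative.toAdd a) with h1 | h1 <;>
      rcases hcases (Multiplicative.toAdd b) with h2 | h2 <;>
      simp [hab, h1, h2, hinv, h11]

/-- The generalized dihedral group `Dih(A) = C₂ ⋉ A`: the semidirect product
in which the nontrivial element of `C₂` acts on the abelian group `A` by
inversion. -/
abbrev Dih (A : Type*) [CommGroup A] :=
  SemidirectProduct A (Multiplicative (ZMod 2)) (dihTwist A)

/-- The natural inclusion `A ↪ Dih(A)`, identifying `A` with a normal
subgroup of index 2 of `Dih(A)`. -/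
abbrev DihInl (A : Type*) [CommGroup A] : A →* Dih A := SemidirectProduct.inl

/-- `Dih A` is in bijection with `A × C₂`. -/
def dihEquivProd (A : Type*) [CommGroup A] : Dih A ≃ A × Multiplicative (ZMod 2) where
  toFun x := (x.left, x.right)
  invFun p := ⟨p.1, p.2⟩
  left_inv _ := rfl
  right_inv _ := rfl

instance (A : Type*) [CommGroup A] [Fintype A] : Fintype (Dih A) :=
  Fintype.ofEquiv _ (dihEquivProd A).symm

open Subgroup in
theorem gameNim_eq {G : Type*} [Group G] [Fintype G] (P : Set G) (h : Subgroup.closure P ≠ ⊤) :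
    gameNim P = sInf {n : ℕ | ∀ g ∉ P, n ≠ gameNim (insert g P)} := by
  rw [gameNim]
  simp [h]

theorem gameNim_terminal {G : Type*} [Group G] [Fintype G] (P : Set G) (h : Subgroup.closure P = ⊤) :
    gameNim P = 0 := by rw [gameNim]; simp [h]

theorem mex_eq {S : Set ℕ} {m : ℕ} (h1 : m ∈ S) (h2 : ∀ k < m, k ∉ S) : sInf S = m := by
  have hle : sInf S ≤ m := Nat.sInf_le h1
  have hmem : sInf S ∈ S := Nat.sInf_mem ⟨m, h1⟩
  rcases lt_or_eq_of_le hle with h | h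
  · exact absurd hmem (h2 _ h)
  · exact h
namespace DihAux
open Subgroup SemidirectProduct

variable {A : Type*} [CommGroup A]

lemma s_cases (s : Multiplicative (ZMod 2)) : s = 1 ∨ s = Multiplicative.ofAdd 1 := by
  revert s; decide
lemma s_mul_self (s : Multiplicative (ZMod 2)) : s * s = 1 := by revert s; decide
lemma s_inv (s : Multiplicative (ZMod 2)) : s⁻¹ = s := by revert s; decide
lemma s_mul_ne {s t : Multiplicative (ZMod 2)} (hs : s ≠ 1) (ht : t ≠ 1) : s * t = 1 := by
  revert s t; decide
lemma s_ne_iff {s : Multiplicative (ZMod 2)} : s ≠ 1 ↔ Multiplicative.toAdd s ≠ 0 := by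
  revert s; decide

lemma twist_one' (a : A) : dihTwist A 1 a = a := by simp [dihTwist]
lemma twist_ne {s : Multiplicative (ZMod 2)} (hs : s ≠ 1) (a : A) : dihTwist A s a = a⁻¹ := by
  have h := s_ne_iff.mp hs
  simp only [dihTwist, MonoidHom.coe_mk, OneHom.coe_mk, if_neg h]
  rfl

/-- the subgroup of "rotations", the image of `A`. -/
def tA (A : Type*) [CommGroup A] : Subgroup (Dih A) := (DihInl A).range

lemma mem_tA {x : Dih A} : x ∈ tA A ↔ x.right = 1 := by
  constructor
  · rintro ⟨a, rfl⟩; rfl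
  · intro h; exact ⟨x.left, by ext <;> simp [h]⟩

lemma rot_mem_tA (a : A) : DihInl A a ∈ tA A := ⟨a, rfl⟩

lemma sq_one {x : Dih A} (hx : x.right ≠ 1) : x * x = 1 := by
  ext
  · simp [twist_ne hx]
  · simp [s_mul_self]

lemma tA_ne_top : (tA A) ≠ ⊤ := by
  intro h
  have : (⟨1, Multiplicative.ofAdd 1⟩ : Dih A) ∈ tA A := h ▸ mem_top _
  have h2 := mem_tA.mp this
  simp only at h2
  exact absurd h2 (by decide)

lemma eq_top_of_lt_tA {K : Subgroup (Dih A)} (hK : tA A ≤ K) {x : Dih A}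
    (hx : x ∈ K) (hxr : x.right ≠ 1) : K = ⊤ := by
  ext y
  simp only [mem_top, iff_true]
  by_cases hy : y.right = 1
  · exact hK (mem_tA.mpr hy)
  · have h1 : (y * x⁻¹).right = 1 := by
      simp only [mul_right, inv_right, s_inv]
      exact s_mul_ne hy hxr
    have h2 : y * x⁻¹ ∈ K := hK (mem_tA.mpr h1)
    simpa using mul_mem h2 hx

lemma tA_coatom : IsCoatom (tA A) := by
  refine ⟨tA_ne_top, fun K hK => ?_⟩
  obtain ⟨x, hxK, hxA⟩ := SetLike.exists_of_lt hK
  exact eq_top_of_lt_tA hK.le hxK (fun h => hxA (mem_tA.mpr h))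

/-- The subgroup `D ∪ (bD)t` of `Dih A`, for `D ≤ A`, `b : A`. -/
def dsub (D : Subgroup A) (b : A) : Subgroup (Dih A) where
  carrier := {x | if x.right = 1 then x.left ∈ D else b⁻¹ * x.left ∈ D}
  one_mem' := by
    simp only [Set.mem_setOf_eq, one_right, if_pos, one_left]
    exact one_mem D
  mul_mem' := by
    intro x y hx hy
    simp only [Set.mem_setOf_eq, mul_left, mul_right] at *
    by_cases h1 : x.right = 1 <;> by_cases h2 : y.right = 1
    · rw [if_pos h1] at hx; rw [if_pos h2] at hy
      rw [if_pos (by rw [h1, h2, one_mul]), h1, twist_one']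
      exact mul_mem hx hy
    · rw [if_pos h1] at hx; rw [if_neg h2] at hy
      rw [if_neg (by rw [h1, one_mul]; exact h2), h1, twist_one']
      have key : b⁻¹ * (x.left * y.left) = x.left * (b⁻¹ * y.left) := by
        rw [mul_comm b⁻¹ (x.left * y.left), mul_assoc, mul_comm y.left b⁻¹]
      rw [key]
      exact mul_mem hx hy
    · rw [if_neg h1] at hx; rw [if_pos h2] at hy
      rw [if_neg (by rw [h2, mul_one]; exact h1), twist_ne h1]
      have key : b⁻¹ * (x.left * y.left⁻¹) = (b⁻¹ * x.left) * y.left⁻¹ := (mul_assoc _ _ _).symm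
      rw [key]
      exact mul_mem hx (inv_mem hy)
    · rw [if_neg h1] at hx; rw [if_neg h2] at hy
      rw [if_pos (s_mul_ne h1 h2), twist_ne h1]
      have key : x.left * y.left⁻¹ = (b⁻¹ * x.left) * (b⁻¹ * y.left)⁻¹ := by
        rw [mul_inv_rev, inv_inv]
        rw [mul_comm b⁻¹ x.left, mul_assoc, ← mul_assoc b⁻¹ y.left⁻¹ b, mul_comm b⁻¹ y.left⁻¹, mul_assoc, inv_mul_cancel, mul_one]
      rw [key]
      exact mul_mem hx (inv_mem hy)
  inv_mem' := by
    intro x hx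
    simp only [Set.mem_setOf_eq, inv_left, inv_right, s_inv] at *
    by_cases h1 : x.right = 1
    · rw [if_pos h1] at *
      rw [h1, twist_one']
      exact inv_mem hx
    · rw [if_neg h1] at *
      rw [twist_ne h1, inv_inv]
      exact hx

lemma mem_dsub {D : Subgroup A} {b : A} {x : Dih A} :
    x ∈ dsub D b ↔ (if x.right = 1 then x.left ∈ D else b⁻¹ * x.left ∈ D) := Iff.rfl

end DihAux
namespace DihAux
open Subgroup SemidirectProduct

variable {A : Type*} [CommGroup A]

lemma rot_mem_dsub {D : Subgroup A} {b : A} {a : A} : DihInl A a ∈ dsub D b ↔ a ∈ D := by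
  rw [mem_dsub]; simp

lemma refl_mem_dsub {D : Subgroup A} {b : A} {x : Dih A} (hx : x.right ≠ 1) :
    x ∈ dsub D b ↔ b⁻¹ * x.left ∈ D := by rw [mem_dsub, if_neg hx]

lemma dsub_ne_top {D : Subgroup A} {b : A} (hD : D ≠ ⊤) : dsub D b ≠ ⊤ := by
  intro h
  apply hD
  ext a
  simp only [mem_top, iff_true]
  exact rot_mem_dsub.mp (h ▸ mem_top (DihInl A a))

lemma ofadd_ne : (Multiplicative.ofAdd (1 : ZMod 2)) ≠ 1 := by decide

lemma base_refl_mem_dsub {D : Subgroup A} {b : A} :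
    (⟨b, Multiplicative.ofAdd 1⟩ : Dih A) ∈ dsub D b := by
  rw [mem_dsub, if_neg ofadd_ne]
  simp only [inv_mul_cancel]
  exact one_mem D

lemma dsub_coatom {B : Subgroup A} (hB : IsCoatom B) (b : A) : IsCoatom (dsub B b) := by
  constructor
  · exact dsub_ne_top hB.1
  · intro K hK
    obtain ⟨x, hxK, hxB⟩ := SetLike.exists_of_lt hK
    -- produce a rotation in K outside B
    have hsub : dsub B b ≤ K := hK.le
    have htb : (⟨b, Multiplicative.ofAdd 1⟩ : Dih A) ∈ K := hsub base_refl_mem_dsub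
    have key : ∃ a : A, a ∉ B ∧ DihInl A a ∈ K := by
      by_cases hr : x.right = 1
      · refine ⟨x.left, fun h => hxB (mem_dsub.mpr (by rw [if_pos hr]; exact h)), ?_⟩
        have : DihInl A x.left = x := by ext <;> simp [hr]
        rwa [this]
      · refine ⟨b * x.left⁻¹, ?_, ?_⟩
        · intro h
          apply hxB
          rw [refl_mem_dsub hr]
          have : b⁻¹ * x.left = (b * x.left⁻¹)⁻¹ := by
            rw [mul_inv_rev, inv_inv, mul_comm]
          rw [this]
          exact inv_mem h
        · have hmul : (⟨b, Multiplicative.ofAdd 1⟩ : Dih A) * x⁻¹ = DihInl A (b * x.left⁻¹) := by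
            ext
            · simp only [mul_left, inv_left, left_inl]
              rw [s_inv, twist_ne hr, twist_ne ofadd_ne, inv_inv]
            · simp only [mul_right, inv_right, s_inv, right_inl]
              exact s_mul_ne ofadd_ne hr
          rw [← hmul]
          exact mul_mem htb (inv_mem hxK)
    obtain ⟨a, haB, haK⟩ := key
    -- the rotations in K form a subgroup of A containing B and a, hence everything
    have hC : (Subgroup.comap (DihInl A) K) = ⊤ := by
      have h1 : B < Subgroup.comap (DihInl A) K := by
        refine lt_of_le_of_ne (fun c hc => ?_) (fun h => haB (h ▸ (mem_comap.mpr haK)))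
        exact mem_comap.mpr (hsub (rot_mem_dsub.mpr hc))
      exact hB.2 _ h1
    have hAK : tA A ≤ K := by
      rintro y ⟨c, rfl⟩
      exact mem_comap.mp (hC ▸ mem_top c)
    exact eq_top_of_lt_tA hAK htb ofadd_ne

/-- rotations subgroups: map inl C -/
lemma map_comap_tA {I : Subgroup (Dih A)} (hI : I ≤ tA A) :
    Subgroup.map (DihInl A) (Subgroup.comap (DihInl A) I) = I := by
  rw [Subgroup.map_comap_eq]
  exact inf_eq_right.mpr hI

lemma odd_le_tA {K : Subgroup (Dih A)} (h : ∀ x ∈ K, x * x = 1 → x = 1) : True := trivial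

/-- If a subgroup contains an element with nontrivial right component, its cardinality is even. -/
lemma even_card_of_refl [Fintype A] {K : Subgroup (Dih A)} {x : Dih A}
    (hx : x ∈ K) (hr : x.right ≠ 1) : 2 ∣ Nat.card K := by
  have hx1 : x ≠ 1 := fun h => hr (by rw [h]; rfl)
  have h2 : orderOf x = 2 := orderOf_eq_prime (by rw [sq]; exact sq_one hr) hx1
  have h3 : orderOf (⟨x, hx⟩ : K) = 2 := by rwa [Subgroup.orderOf_mk]
  have := orderOf_dvd_natCard (⟨x, hx⟩ : K)
  rwa [h3] at this

lemma card_tA [Fintype A] : Nat.card (tA A) = Nat.card A := by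
  have hinj : Function.Injective (DihInl A) := SemidirectProduct.inl_injective
  exact (Nat.card_congr (MonoidHom.ofInjective hinj).toEquiv).symm

lemma odd_iff_le_tA [Fintype A] (hodd : Odd (Nat.card A)) (K : Subgroup (Dih A)) :
    Odd (Nat.card K) ↔ K ≤ tA A := by
  constructor
  · intro h
    intro x hx
    by_contra hxA
    have hr : x.right ≠ 1 := fun hh => hxA (mem_tA.mpr hh)
    have := even_card_of_refl hx hr
    rw [Nat.odd_iff] at h
    omega
  · intro h
    have hdvd : Nat.card K ∣ Nat.card A := by
      rw [← card_tA (A := A)]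
      exact Subgroup.card_dvd_of_le h
    obtain ⟨c, hc⟩ := hdvd
    have h2 : Odd (Nat.card K * c) := hc ▸ hodd
    exact (Nat.odd_mul.mp h2).1

end DihAux
namespace DihAux
open Subgroup SemidirectProduct

variable {A : Type*} [CommGroup A]

lemma rot_eq {x : Dih A} (h : x.right = 1) : DihInl A x.left = x := by
  ext <;> simp [h]

lemma top_of_CR {K : Subgroup (Dih A)} {C : Subgroup A} {R : Set A}
    (h : Subgroup.closure ((C : Set A) ∪ R) = ⊤)
    (hC : ∀ c ∈ C, DihInl A c ∈ K) (hR : ∀ a ∈ R, DihInl A a ∈ K)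
    {r : Dih A} (hrK : r ∈ K) (hr : r.right ≠ 1) : K = ⊤ := by
  have h1 : tA A ≤ K := by
    have h2 : Subgroup.closure ((DihInl A) '' ((C : Set A) ∪ R)) ≤ K := by
      rw [Subgroup.closure_le]
      rintro x ⟨a, ha | ha, rfl⟩
      · exact hC a ha
      · exact hR a ha
    rwa [← MonoidHom.map_closure, h, ← MonoidHom.range_eq_map] at h2
  exact eq_top_of_lt_tA h1 hrK hr

lemma top_of_uv_refl {u v : A} (huv : Subgroup.closure {u, v} = ⊤) {K : Subgroup (Dih A)}
    (hu : DihInl A u ∈ K) (hv : DihInl A v ∈ K) {r : Dih A}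
    (hrK : r ∈ K) (hr : r.right ≠ 1) : K = ⊤ := by
  have h1 : tA A ≤ K := by
    have h2 : Subgroup.closure ((DihInl A) '' {u, v}) ≤ K := by
      rw [Subgroup.closure_le]
      rintro x ⟨a, ha | ha, rfl⟩ <;> subst ha <;> assumption
    rwa [← MonoidHom.map_closure, huv, ← MonoidHom.range_eq_map] at h2
  exact eq_top_of_lt_tA h1 hrK hr

/-- The key extraction lemma: from a generating set consisting of a rotation
subgroup and `Q`, where `Q` contains a reflection `g₀`, one can produce a
generating set of `A` of size `|Q| - 1` together with `C`. -/
lemma extract {C : Subgroup A} {Q : Finset (Dih A)}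
    (h : Subgroup.closure ((Subgroup.map (DihInl A) C : Set (Dih A)) ∪ ↑Q) = ⊤)
    {g₀ : Dih A} (hg₀ : g₀ ∈ Q) (hr : g₀.right ≠ 1) :
    ∃ R : Finset A, R.card + 1 ≤ Q.card ∧ Subgroup.closure ((C : Set A) ∪ ↑R) = ⊤ := by
  classical
  set f : Dih A → A := fun g => if g.right = 1 then g.left else g₀.left⁻¹ * g.left with hf
  refine ⟨(Q.erase g₀).image f, ?_, ?_⟩
  · have h1 := Finset.card_image_le (s := Q.erase g₀) (f := f)
    have h2 := Finset.card_erase_of_mem hg₀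
    have h3 : 0 < Q.card := Finset.card_pos.mpr ⟨g₀, hg₀⟩
    omega
  · set D := Subgroup.closure ((C : Set A) ∪ ↑((Q.erase g₀).image f)) with hD
    by_contra hDne
    have hs : dsub D g₀.left = ⊤ := by
      rw [← top_le_iff, ← h, Subgroup.closure_le]
      rintro x (hx | hx)
      · rw [Subgroup.coe_map] at hx
        obtain ⟨c, hc, rfl⟩ := hx
        exact rot_mem_dsub.mpr (subset_closure (Or.inl hc))
      · by_cases hx0 : x = g₀
        · subst hx0
          rw [SetLike.mem_coe, refl_mem_dsub hr]
          simp only [inv_mul_cancel]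
          exact one_mem D
        · have hxe : x ∈ Q.erase g₀ := Finset.mem_erase.mpr ⟨hx0, hx⟩
          have hfx : f x ∈ (Q.erase g₀).image f := Finset.mem_image_of_mem f hxe
          have hfD : (if x.right = 1 then x.left else g₀.left⁻¹ * x.left) ∈ D :=
            subset_closure (Or.inr hfx)
          by_cases hxr : x.right = 1
          · rw [SetLike.mem_coe, ← rot_eq hxr, rot_mem_dsub]
            rwa [if_pos hxr] at hfD
          · rw [SetLike.mem_coe, refl_mem_dsub hxr]
            rwa [if_neg hxr] at hfD
    exact dsub_ne_top hDne hs

end DihAux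
section Generic
open Subgroup

variable {G : Type*} [Group G] [Fintype G]

lemma exists_coatom_ge {K : Subgroup G} (h : K ≠ ⊤) : ∃ M : Subgroup G, IsCoatom M ∧ K ≤ M := by
  obtain h2 | ⟨M, hM, hKM⟩ := IsCoatomic.eq_top_or_exists_le_coatom K
  · exact absurd h2 h
  · exact ⟨M, hM, hKM⟩

lemma subset_interCeil (P : Set G) : P ⊆ ↑(interCeil P) := fun x hx =>
  Subgroup.mem_sInf.mpr (fun _ hM => hM.2 hx)

lemma interCeil_le_coatom {P : Set G} {M : Subgroup G} (hM : IsCoatom M) (h : P ⊆ ↑M) :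
    interCeil P ≤ M := sInf_le ⟨hM, h⟩

lemma subset_coatom_iff {P : Set G} {M : Subgroup G} (hM : IsCoatom M) :
    P ⊆ ↑M ↔ interCeil P ≤ M :=
  ⟨interCeil_le_coatom hM, fun h => (subset_interCeil P).trans h⟩

lemma closure_eq_top_iff' (S : Set G) :
    Subgroup.closure S = ⊤ ↔ ∀ M : Subgroup G, IsCoatom M → ¬S ⊆ ↑M := by
  constructor
  · intro h M hM hSM
    have := (Subgroup.closure_le M).mpr hSM
    rw [h, top_le_iff] at this
    exact hM.1 this
  · intro h
    by_contra hne
    obtain ⟨M, hM, hle⟩ := exists_coatom_ge hne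
    exact h M hM ((Subgroup.subset_closure).trans hle)

lemma closure_union_top_iff (P Q : Set G) :
    Subgroup.closure (P ∪ Q) = ⊤ ↔ Subgroup.closure (↑(interCeil P) ∪ Q) = ⊤ := by
  rw [closure_eq_top_iff', closure_eq_top_iff']
  apply forall_congr'; intro M
  constructor
  · intro h hM hsub
    refine h hM ?_
    rw [Set.union_subset_iff] at *
    exact ⟨(subset_interCeil P).trans hsub.1, hsub.2⟩
  · intro h hM hsub
    refine h hM ?_
    rw [Set.union_subset_iff] at *
    exact ⟨(subset_coatom_iff hM).mp hsub.1, hsub.2⟩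

lemma closure_insert_top_iff (P : Set G) (g : G) :
    Subgroup.closure (insert g P) = ⊤ ↔ Subgroup.closure (insert g (↑(interCeil P) : Set G)) = ⊤ := by
  have h1 : insert g P = P ∪ {g} := by rw [Set.union_singleton]
  have h2 : insert g (↑(interCeil P) : Set G) = ↑(interCeil P) ∪ {g} := by rw [Set.union_singleton]
  rw [h1, h2]
  exact closure_union_top_iff P {g}

lemma interCeil_ne_top {P : Set G} (hP : Subgroup.closure P ≠ ⊤) : interCeil P ≠ ⊤ := by
  obtain ⟨M, hM, hle⟩ := exists_coatom_ge hP
  intro h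
  have h2 : interCeil P ≤ M := interCeil_le_coatom hM ((Subgroup.subset_closure).trans hle)
  rw [h, top_le_iff] at h2
  exact hM.1 h2

lemma interCeil_insert_eq (P : Set G) (g : G) :
    interCeil (insert g P) = interCeil (insert g (↑(interCeil P) : Set G)) := by
  unfold interCeil
  congr 1
  ext M
  simp only [Set.mem_setOf_eq, Set.insert_subset_iff, and_congr_right_iff, and_congr_right_iff]
  intro hM hg
  constructor
  · intro hP
    exact SetLike.coe_subset_coe.mpr ((subset_coatom_iff hM).mp hP)
  · intro hI
    exact (subset_interCeil P).trans hI

lemma le_interCeil_insert (P : Set G) (g : G) : interCeil P ≤ interCeil (insert g P) := by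
  apply sInf_le_sInf
  rintro M ⟨hM, hsub⟩
  exact ⟨hM, (Set.subset_insert g P).trans hsub⟩

lemma mem_interCeil_insert (P : Set G) (g : G) : g ∈ interCeil (insert g P) :=
  subset_interCeil _ (Set.mem_insert g P)

lemma interCeil_insert_of_mem {P : Set G} {g : G} (hg : g ∈ interCeil P) :
    interCeil (insert g P) = interCeil P := by
  unfold interCeil
  congr 1
  ext M
  simp only [Set.mem_setOf_eq, Set.insert_subset_iff, and_congr_right_iff]
  intro hM
  constructor
  · rintro ⟨_, hP⟩; exact hP
  · intro hP; exact ⟨(subset_coatom_iff hM).mp hP hg, hP⟩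

lemma deficiency_le {P : Set G} {Q : Finset G} (h : Subgroup.closure (P ∪ ↑Q) = ⊤) :
    deficiency P ≤ Q.card := Nat.sInf_le ⟨Q, rfl, h⟩

lemma deficiency_exists (P : Set G) :
    ∃ Q : Finset G, Q.card = deficiency P ∧ Subgroup.closure (P ∪ ↑Q) = ⊤ := by
  classical
  have h : Subgroup.closure (P ∪ ↑(Finset.univ : Finset G)) = ⊤ := by
    rw [Finset.coe_univ, Set.union_univ, Subgroup.closure_univ]
  have hne : {n : ℕ | ∃ Q : Finset G, Q.card = n ∧ Subgroup.closure (P ∪ ↑Q) = ⊤}.Nonempty :=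
    ⟨(Finset.univ : Finset G).card, Finset.univ, rfl, h⟩
  exact Nat.sInf_mem hne

lemma deficiency_zero_iff (P : Set G) : deficiency P = 0 ↔ Subgroup.closure P = ⊤ := by
  constructor
  · intro h
    obtain ⟨Q, hQ, htop⟩ := deficiency_exists P
    rw [h, Finset.card_eq_zero] at hQ
    subst hQ
    simpa using htop
  · intro h
    have : deficiency P ≤ (∅ : Finset G).card := deficiency_le (by simpa using h)
    simpa using this

lemma deficiency_interCeil (P : Set G) :
    deficiency (↑(interCeil P) : Set G) = deficiency P := by
  unfold deficiency
  congr 1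
  ext n
  constructor
  · rintro ⟨Q, hQ, htop⟩
    exact ⟨Q, hQ, (closure_union_top_iff P ↑Q).mpr htop⟩
  · rintro ⟨Q, hQ, htop⟩
    exact ⟨Q, hQ, (closure_union_top_iff P ↑Q).mp htop⟩

lemma deficiency_insert_le (P : Set G) (g : G) : deficiency (insert g P) ≤ deficiency P := by
  obtain ⟨Q, hQ, htop⟩ := deficiency_exists P
  rw [← hQ]
  apply deficiency_le
  rw [eq_top_iff, ← htop]
  apply Subgroup.closure_mono
  exact Set.union_subset_union_left _ (Set.subset_insert g P)

lemma deficiency_le_insert (P : Set G) (g : G) :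
    deficiency P ≤ deficiency (insert g P) + 1 := by
  classical
  obtain ⟨Q, hQ, htop⟩ := deficiency_exists (insert g P)
  have h1 : Subgroup.closure (P ∪ ↑(insert g Q)) = ⊤ := by
    rw [eq_top_iff, ← htop]
    apply Subgroup.closure_mono
    intro x hx
    rcases hx with hx | hx
    · rcases hx with rfl | hx
      · exact Or.inr (by simp)
      · exact Or.inl hx
    · exact Or.inr (by simp [hx])
  have h2 := deficiency_le h1
  have h3 : (insert g Q).card ≤ Q.card + 1 := Finset.card_insert_le g Q
  omega

lemma deficiency_one_of {P : Set G} (hne : Subgroup.closure P ≠ ⊤) {g : G}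
    (h : Subgroup.closure (insert g P) = ⊤) : deficiency P = 1 := by
  classical
  have h1 : deficiency P ≤ 1 := by
    have : Subgroup.closure (P ∪ ↑({g} : Finset G)) = ⊤ := by
      rwa [Finset.coe_singleton, Set.union_singleton]
    simpa using deficiency_le this
  have h2 : deficiency P ≠ 0 := fun hh => hne ((deficiency_zero_iff P).mp hh)
  omega

end Generic
namespace DihAux
open Subgroup SemidirectProduct

variable {A : Type*} [CommGroup A] [Fintype A]

/-- the standard reflection -/
def tZ (A : Type*) [CommGroup A] : Dih A := ⟨1, Multiplicative.ofAdd 1⟩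

lemma tZ_right : (tZ A).right ≠ 1 := ofadd_ne

lemma tZ_notin_tA : tZ A ∉ tA A := fun h => tZ_right (mem_tA.mp h)

lemma card_coe (I : Subgroup (Dih A)) : (↑I : Set (Dih A)).ncard = Nat.card I := by
  rw [← Nat.card_coe_set_eq, SetLike.coe_sort_coe]

variable {u v : A} (huv : Subgroup.closure {u, v} = ⊤)

include huv in
lemma def_le_three (P : Set (Dih A)) : deficiency P ≤ 3 := by
  classical
  have htop : Subgroup.closure (P ∪ ↑({DihInl A u, DihInl A v, tZ A} : Finset (Dih A))) = ⊤ := by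
    apply top_of_uv_refl huv (r := tZ A)
    · apply Subgroup.subset_closure; simp
    · apply Subgroup.subset_closure; simp
    · apply Subgroup.subset_closure; simp
    · exact tZ_right
  have := deficiency_le htop
  have hc : ({DihInl A u, DihInl A v, tZ A} : Finset (Dih A)).card ≤ 3 := by
    apply le_trans (Finset.card_insert_le _ _)
    have := Finset.card_insert_le (DihInl A v) ({tZ A} : Finset (Dih A))
    simp at this ⊢
    omega
  omega

include huv in
lemma def_le_two_of_refl {I : Subgroup (Dih A)} {r : Dih A} (hr : r ∈ I) (hrr : r.right ≠ 1) :
    deficiency (↑I : Set (Dih A)) ≤ 2 := by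
  classical
  have htop : Subgroup.closure ((↑I : Set (Dih A)) ∪ ↑({DihInl A u, DihInl A v} : Finset (Dih A))) = ⊤ := by
    apply top_of_uv_refl huv (r := r)
    · apply Subgroup.subset_closure; simp
    · apply Subgroup.subset_closure; simp
    · exact Subgroup.subset_closure (Or.inl hr)
    · exact hrr
  have := deficiency_le htop
  have hc : ({DihInl A u, DihInl A v} : Finset (Dih A)).card ≤ 2 := by
    apply le_trans (Finset.card_insert_le _ _)
    simp
  omega

lemma def_pos {I : Subgroup (Dih A)} (h : I ≠ ⊤) : deficiency (↑I : Set (Dih A)) ≠ 0 := by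
  intro h0
  rw [deficiency_zero_iff, Subgroup.closure_eq] at h0
  exact h h0

lemma odd_extract {I : Subgroup (Dih A)} (hI : I ≤ tA A) {Q : Finset (Dih A)}
    (h : Subgroup.closure ((↑I : Set (Dih A)) ∪ ↑Q) = ⊤) :
    ∃ R : Finset A, R.card + 1 ≤ Q.card ∧
      Subgroup.closure ((↑(Subgroup.comap (DihInl A) I) : Set A) ∪ ↑R) = ⊤ := by
  have hmc : Subgroup.map (DihInl A) (Subgroup.comap (DihInl A) I) = I := map_comap_tA hI
  obtain ⟨g₀, hg₀, hg₀r⟩ : ∃ g₀ ∈ Q, g₀.right ≠ 1 := by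
    by_contra hall
    push_neg at hall
    have hle : Subgroup.closure ((↑I : Set (Dih A)) ∪ ↑Q) ≤ tA A := by
      rw [Subgroup.closure_le]
      rintro x (hx | hx)
      · exact hI hx
      · exact mem_tA.mpr (hall x hx)
    rw [h, top_le_iff] at hle
    exact tA_ne_top hle
  exact extract (by rwa [hmc]) hg₀ hg₀r

lemma def_tA : deficiency (↑(tA A) : Set (Dih A)) = 1 := by
  apply deficiency_one_of (g := tZ A)
  · rw [Subgroup.closure_eq]; exact tA_ne_top
  · apply eq_top_of_lt_tA (x := tZ A)
    · intro y hy
      exact Subgroup.subset_closure (Set.mem_insert_iff.mpr (Or.inr hy))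
    · exact Subgroup.subset_closure (Set.mem_insert _ _)
    · exact tZ_right

include huv in
lemma odd_def_one {I : Subgroup (Dih A)} (hI : I ≤ tA A)
    (h : deficiency (↑I : Set (Dih A)) = 1) : I = tA A := by
  obtain ⟨Q, hQ, htop⟩ := deficiency_exists (↑I : Set (Dih A))
  rw [h] at hQ
  obtain ⟨R, hR, hRtop⟩ := odd_extract hI htop
  have hR0 : R = ∅ := by
    rw [← Finset.card_eq_zero]; omega
  subst hR0
  simp only [Finset.coe_empty, Set.union_empty, Subgroup.closure_eq] at hRtop
  rw [← map_comap_tA hI, hRtop]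
  rw [← MonoidHom.range_eq_map]
  rfl

lemma closure_rot_ne_top {I : Subgroup (Dih A)} (hI : I ≤ tA A) {g : Dih A} (hg : g ∈ tA A) :
    Subgroup.closure (insert g (↑I : Set (Dih A))) ≠ ⊤ := by
  intro h
  have hle : Subgroup.closure (insert g (↑I : Set (Dih A))) ≤ tA A := by
    rw [Subgroup.closure_le]
    rintro x (rfl | hx)
    · exact hg
    · exact hI hx
  rw [h, top_le_iff] at hle
  exact tA_ne_top hle

lemma rot_move_to_tA {I : Subgroup (Dih A)} (hI : I ≤ tA A) {a : A}
    (ha : Subgroup.closure ((↑(Subgroup.comap (DihInl A) I) : Set A) ∪ {a}) = ⊤) :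
    interCeil (insert (DihInl A a) (↑I : Set (Dih A))) = tA A := by
  apply le_antisymm
  · apply interCeil_le_coatom tA_coatom
    rintro x (rfl | hx)
    · exact rot_mem_tA a
    · exact hI hx
  · apply le_sInf
    rintro M ⟨hM, hsub⟩
    have h2 : Subgroup.closure ((DihInl A) '' ((↑(Subgroup.comap (DihInl A) I) : Set A) ∪ {a})) ≤ M := by
      rw [Subgroup.closure_le]
      rintro x ⟨c, hc | rfl, rfl⟩
      · exact hsub (Set.mem_insert_iff.mpr (Or.inr (mem_comap.mp hc)))
      · exact hsub (Set.mem_insert _ _)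
    rwa [← MonoidHom.map_closure, ha, ← MonoidHom.range_eq_map] at h2

include huv in
lemma odd_two_move {I : Subgroup (Dih A)} (hI : I ≤ tA A)
    (hd : deficiency (↑I : Set (Dih A)) = 2) :
    ∃ a : A, DihInl A a ∉ I ∧
      Subgroup.closure ((↑(Subgroup.comap (DihInl A) I) : Set A) ∪ {a}) = ⊤ := by
  have hne : I ≠ tA A := by
    intro h; rw [h, def_tA] at hd; omega
  obtain ⟨Q, hQ, htop⟩ := deficiency_exists (↑I : Set (Dih A))
  rw [hd] at hQ
  obtain ⟨R, hR, hRtop⟩ := odd_extract hI htop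
  have hCne : Subgroup.comap (DihInl A) I ≠ ⊤ := by
    intro h
    apply hne
    rw [← map_comap_tA hI, h, ← MonoidHom.range_eq_map]
    rfl
  obtain ⟨a, ha⟩ : ∃ a : A, R = {a} := by
    have h1 : R.card ≤ 1 := by omega
    by_cases h0 : R.card = 0
    · exfalso
      rw [Finset.card_eq_zero] at h0
      subst h0
      simp only [Finset.coe_empty, Set.union_empty, Subgroup.closure_eq] at hRtop
      exact hCne hRtop
    · exact Finset.card_eq_one.mp (by omega)
  subst ha
  simp only [Finset.coe_singleton] at hRtop
  refine ⟨a, ?_, hRtop⟩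
  intro haI
  apply hCne
  have : a ∈ Subgroup.comap (DihInl A) I := mem_comap.mpr haI
  have hsub : ((↑(Subgroup.comap (DihInl A) I) : Set A) ∪ {a}) ⊆ ↑(Subgroup.comap (DihInl A) I) := by
    rintro x (hx | rfl)
    · exact hx
    · exact this
  rw [← Subgroup.closure_eq (Subgroup.comap (DihInl A) I)]
  rw [eq_top_iff, ← hRtop]
  exact Subgroup.closure_mono hsub

end DihAux
namespace DihAux
open Subgroup SemidirectProduct

variable {A : Type*} [CommGroup A] [Fintype A]
variable {u v : A} (huv : Subgroup.closure {u, v} = ⊤)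

lemma exists_refl_of_not_odd (hodd : Odd (Nat.card A)) {I : Subgroup (Dih A)}
    (h : ¬Odd (Nat.card I)) : ∃ r ∈ I, r.right ≠ 1 := by
  have h2 : ¬I ≤ tA A := fun hh => h ((odd_iff_le_tA hodd I).mpr hh)
  obtain ⟨r, hr, hr2⟩ := SetLike.not_le_iff_exists.mp h2
  exact ⟨r, hr, fun hh => hr2 (mem_tA.mpr hh)⟩

lemma I_le_interCeil_insert {I : Subgroup (Dih A)} (g : Dih A) :
    I ≤ interCeil (insert g (↑I : Set (Dih A))) := by
  intro x hx
  exact subset_interCeil _ (Set.mem_insert_iff.mpr (Or.inr hx))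

lemma not_odd_interCeil_refl {I : Subgroup (Dih A)} {g : Dih A} (hg : g.right ≠ 1) :
    ¬Odd (Nat.card (interCeil (insert g (↑I : Set (Dih A))))) := by
  have hmem : g ∈ interCeil (insert g (↑I : Set (Dih A))) := mem_interCeil_insert _ _
  have := even_card_of_refl hmem hg
  rw [Nat.odd_iff]
  omega

include huv in
lemma odd_three_umove {I : Subgroup (Dih A)} (hI : I ≤ tA A)
    (hd : deficiency (↑I : Set (Dih A)) = 3) :
    DihInl A u ∉ I ∧ interCeil (insert (DihInl A u) (↑I : Set (Dih A))) ≤ tA A ∧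
      deficiency (↑(interCeil (insert (DihInl A u) (↑I : Set (Dih A)))) : Set (Dih A)) = 2 := by
  classical
  set C := Subgroup.comap (DihInl A) I with hC
  have hCmem : ∀ c ∈ C, DihInl A c ∈ I := fun c hc => mem_comap.mp hc
  -- u ∉ C
  have hu : DihInl A u ∉ I := by
    intro huI
    have htop : Subgroup.closure ((↑I : Set (Dih A)) ∪ ↑({DihInl A v, tZ A} : Finset (Dih A))) = ⊤ := by
      apply top_of_uv_refl huv (r := tZ A)
      · exact Subgroup.subset_closure (Or.inl huI)
      · apply Subgroup.subset_closure; simp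
      · apply Subgroup.subset_closure; simp
      · exact tZ_right
    have h1 := deficiency_le htop
    have h2 : ({DihInl A v, tZ A} : Finset (Dih A)).card ≤ 2 := Finset.card_insert_le _ _ |>.trans (by simp)
    omega
  set J := interCeil (insert (DihInl A u) (↑I : Set (Dih A))) with hJ
  have hJle : J ≤ tA A := by
    apply interCeil_le_coatom tA_coatom
    rintro x (rfl | hx)
    · exact rot_mem_tA u
    · exact hI hx
  have huJ : DihInl A u ∈ J := mem_interCeil_insert _ _
  -- closure (C ∪ {u}) ≠ ⊤ in A
  have hCu : Subgroup.closure ((↑C : Set A) ∪ {u}) ≠ ⊤ := by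
    intro htop
    have h2 : Subgroup.closure ((↑I : Set (Dih A)) ∪ ↑({DihInl A u, tZ A} : Finset (Dih A))) = ⊤ := by
      apply top_of_CR (C := C) (R := {u}) htop (r := tZ A)
      · intro c hc
        exact Subgroup.subset_closure (Or.inl (hCmem c hc))
      · rintro a rfl
        apply Subgroup.subset_closure; simp
      · apply Subgroup.subset_closure; simp
      · exact tZ_right
    have h1 := deficiency_le h2
    have h3 : ({DihInl A u, tZ A} : Finset (Dih A)).card ≤ 2 := Finset.card_insert_le _ _ |>.trans (by simp)
    omega
  -- J ≠ tA A via a dsub coatom above C ∪ {u}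
  have hJne : J ≠ tA A := by
    obtain ⟨B, hB, hBle⟩ := exists_coatom_ge hCu
    have hMcoatom : IsCoatom (dsub B 1) := dsub_coatom hB 1
    have hJM : J ≤ dsub B 1 := by
      apply interCeil_le_coatom hMcoatom
      rintro x (rfl | hx)
      · exact rot_mem_dsub.mpr (hBle (Subgroup.subset_closure (Or.inr rfl)))
      · have hx1 : x.right = 1 := mem_tA.mp (hI hx)
        rw [← rot_eq hx1]
        refine rot_mem_dsub.mpr (hBle (Subgroup.subset_closure (Or.inl ?_)))
        exact mem_comap.mpr (by rwa [rot_eq hx1])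
    intro hEq
    obtain ⟨b, hb⟩ := SetLike.not_le_iff_exists.mp (fun hle : (⊤ : Subgroup A) ≤ B => hB.1 (top_le_iff.mp hle))
    have : DihInl A b ∈ dsub B 1 := hJM (hEq ▸ rot_mem_tA b)
    exact hb.2 (rot_mem_dsub.mp this)
  -- deficiency computations
  have hle2 : deficiency (↑J : Set (Dih A)) ≤ 2 := by
    have htop : Subgroup.closure ((↑J : Set (Dih A)) ∪ ↑({DihInl A v, tZ A} : Finset (Dih A))) = ⊤ := by
      apply top_of_uv_refl huv (r := tZ A)
      · exact Subgroup.subset_closure (Or.inl huJ)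
      · apply Subgroup.subset_closure; simp
      · apply Subgroup.subset_closure; simp
      · exact tZ_right
    have h1 := deficiency_le htop
    have h2 : ({DihInl A v, tZ A} : Finset (Dih A)).card ≤ 2 := Finset.card_insert_le _ _ |>.trans (by simp)
    omega
  have hne0 : deficiency (↑J : Set (Dih A)) ≠ 0 := by
    apply def_pos
    intro h
    exact tA_ne_top (top_le_iff.mp (h ▸ hJle))
  have hne1 : deficiency (↑J : Set (Dih A)) ≠ 1 := fun h => hJne (odd_def_one huv hJle h)
  refine ⟨hu, hJle, by omega⟩

include huv in
lemma even_two_umove {I : Subgroup (Dih A)} {r : Dih A} (hr : r ∈ I) (hrr : r.right ≠ 1)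
    (hd : deficiency (↑I : Set (Dih A)) = 2) :
    DihInl A u ∉ I ∧ Subgroup.closure (insert (DihInl A u) (↑I : Set (Dih A))) ≠ ⊤ ∧
      deficiency (↑(interCeil (insert (DihInl A u) (↑I : Set (Dih A)))) : Set (Dih A)) = 1 := by
  classical
  have hu : DihInl A u ∉ I := by
    intro huI
    have htop : Subgroup.closure ((↑I : Set (Dih A)) ∪ ↑({DihInl A v} : Finset (Dih A))) = ⊤ := by
      apply top_of_uv_refl huv (r := r)
      · exact Subgroup.subset_closure (Or.inl huI)
      · apply Subgroup.subset_closure; simp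
      · exact Subgroup.subset_closure (Or.inl hr)
      · exact hrr
    have h1 := deficiency_le htop
    simp at h1
    omega
  have hnt : Subgroup.closure (insert (DihInl A u) (↑I : Set (Dih A))) ≠ ⊤ := by
    intro htop
    have h1 : deficiency (↑I : Set (Dih A)) ≤ 1 := by
      have : Subgroup.closure ((↑I : Set (Dih A)) ∪ ↑({DihInl A u} : Finset (Dih A))) = ⊤ := by
        rwa [Finset.coe_singleton, Set.union_singleton]
      simpa using deficiency_le this
    omega
  set J := interCeil (insert (DihInl A u) (↑I : Set (Dih A))) with hJ
  have huJ : DihInl A u ∈ J := mem_interCeil_insert _ _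
  have hrJ : r ∈ J := I_le_interCeil_insert _ hr
  have hle1 : deficiency (↑J : Set (Dih A)) ≤ 1 := by
    have htop : Subgroup.closure ((↑J : Set (Dih A)) ∪ ↑({DihInl A v} : Finset (Dih A))) = ⊤ := by
      apply top_of_uv_refl huv (r := r)
      · exact Subgroup.subset_closure (Or.inl huJ)
      · apply Subgroup.subset_closure; simp
      · exact Subgroup.subset_closure (Or.inl hrJ)
      · exact hrr
    have h1 := deficiency_le htop
    simpa using h1
  have hne0 : deficiency (↑J : Set (Dih A)) ≠ 0 := def_pos (interCeil_ne_top hnt)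
  exact ⟨hu, hnt, by omega⟩

lemma odd_refl_move_def_one {I : Subgroup (Dih A)} (hI : I ≤ tA A) {a : A}
    (ha : Subgroup.closure ((↑(Subgroup.comap (DihInl A) I) : Set A) ∪ {a}) = ⊤)
    {g : Dih A} (hg : g.right ≠ 1)
    (hnt : Subgroup.closure (insert g (↑I : Set (Dih A))) ≠ ⊤) :
    deficiency (↑(interCeil (insert g (↑I : Set (Dih A)))) : Set (Dih A)) = 1 := by
  classical
  set J := interCeil (insert g (↑I : Set (Dih A))) with hJ
  have hgJ : g ∈ J := mem_interCeil_insert _ _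
  have hle1 : deficiency (↑J : Set (Dih A)) ≤ 1 := by
    have htop : Subgroup.closure ((↑J : Set (Dih A)) ∪ ↑({DihInl A a} : Finset (Dih A))) = ⊤ := by
      apply top_of_CR (C := Subgroup.comap (DihInl A) I) (R := {a}) ha (r := g)
      · intro c hc
        exact Subgroup.subset_closure (Or.inl (I_le_interCeil_insert g (mem_comap.mp hc)))
      · rintro x rfl
        apply Subgroup.subset_closure; simp
      · exact Subgroup.subset_closure (Or.inl hgJ)
      · exact hg
    have h1 := deficiency_le htop
    simpa using h1
  have hne0 : deficiency (↑J : Set (Dih A)) ≠ 0 := def_pos (interCeil_ne_top hnt)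
  omega

end DihAux
namespace DihAux
open Subgroup SemidirectProduct

open Classical in
/-- The claimed nim-value table. -/
noncomputable def nimTbl {A : Type*} [CommGroup A] (P : Set (Dih A)) : ℕ :=
  if Odd (Nat.card (interCeil P)) then
    (if deficiency ((interCeil P : Subgroup (Dih A)) : Set (Dih A)) = 1 then
        (if Even P.ncard then 2 else 1)
     else if deficiency ((interCeil P : Subgroup (Dih A)) : Set (Dih A)) = 2 then
        (if Even P.ncard then 3 else 0)
     else (if Even P.ncard then 3 else 1))
  else
    (if deficiency ((interCeil P : Subgroup (Dih A)) : Set (Dih A)) = 1 then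
        (if Even P.ncard then 1 else 2)
     else (if Even P.ncard then 0 else 2))

lemma exists_stay {A : Type*} [CommGroup A] {P : Set (Dih A)} {I : Subgroup (Dih A)}
    (hPI : P ⊆ ↑I) (hne : P.ncard ≠ (↑I : Set (Dih A)).ncard) :
    ∃ g ∈ (↑I : Set (Dih A)), g ∉ P := by
  by_contra h
  push_neg at h
  exact hne (by rw [Set.Subset.antisymm hPI h])

theorem master {A : Type*} [CommGroup A] [Fintype A]
    (hodd : Odd (Nat.card A)) {u v : A} (huv : Subgroup.closure {u, v} = ⊤) :
    ∀ n : ℕ, ∀ P : Set (Dih A), Fintype.card (Dih A) - P.ncard ≤ n →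
      Subgroup.closure P ≠ ⊤ → gameNim P = nimTbl P := by
  intro n
  induction n with
  | zero =>
    intro P h0 hP
    exfalso
    apply hP
    have h1 : P.ncard ≤ (Set.univ : Set (Dih A)).ncard :=
      Set.ncard_le_ncard (Set.subset_univ P) (Set.toFinite _)
    have h2 : (Set.univ : Set (Dih A)).ncard = Fintype.card (Dih A) := by
      rw [Set.ncard_univ, Nat.card_eq_fintype_card]
    have h3 : P = Set.univ := Set.eq_of_subset_of_ncard_le (Set.subset_univ P) (by omega)
    rw [h3, Subgroup.closure_univ]
  | succ n IH =>
    intro P hn hP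
    -- basic cardinality facts
    have hfin : P.Finite := Set.toFinite P
    have huniv : (Set.univ : Set (Dih A)).ncard = Fintype.card (Dih A) := by
      rw [Set.ncard_univ, Nat.card_eq_fintype_card]
    have hPlt : P.ncard < Fintype.card (Dih A) := by
      have h1 : P.ncard ≤ Fintype.card (Dih A) := by
        rw [← huniv]; exact Set.ncard_le_ncard (Set.subset_univ P) (Set.toFinite _)
      rcases lt_or_eq_of_le h1 with h | h
      · exact h
      · exfalso
        apply hP
        have h3 : P = Set.univ :=
          Set.eq_of_subset_of_ncard_le (Set.subset_univ P) (by omega)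
        rw [h3, Subgroup.closure_univ]
    have hins : ∀ g ∉ P, (insert g P).ncard = P.ncard + 1 := fun g hg =>
      Set.ncard_insert_of_notMem hg hfin
    have hstep : ∀ g ∉ P, Fintype.card (Dih A) - (insert g P).ncard ≤ n := by
      intro g hg; rw [hins g hg]; omega
    have hflip : ∀ g ∉ P, Even (insert g P).ncard ↔ ¬Even P.ncard := by
      intro g hg; rw [hins g hg, Nat.even_add_one]
    set I := interCeil P with hIdef
    have hPI : P ⊆ (↑I : Set (Dih A)) := subset_interCeil P
    have hInetop : I ≠ ⊤ := interCeil_ne_top hP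
    set d := deficiency ((I : Subgroup (Dih A)) : Set (Dih A)) with hddef
    have hdP : deficiency P = d := (deficiency_interCeil P).symm
    have hd0 : d ≠ 0 := def_pos hInetop
    have hd3 : d ≤ 3 := def_le_three huv _
    have Hterm : ∀ g : Dih A, Subgroup.closure (insert g P) = ⊤ ↔
        Subgroup.closure (insert g (↑I : Set (Dih A))) = ⊤ := fun g => closure_insert_top_iff P g
    have HJ : ∀ g : Dih A, interCeil (insert g P) = interCeil (insert g (↑I : Set (Dih A))) :=
      fun g => interCeil_insert_eq P g
    have HIJ : ∀ g : Dih A, I ≤ interCeil (insert g P) := fun g => le_interCeil_insert P g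
    -- the value of a "stay" move
    have val_stay : ∀ g ∈ (↑I : Set (Dih A)), g ∉ P →
        Subgroup.closure (insert g P) ≠ ⊤ ∧ interCeil (insert g P) = I := by
      intro g hg hgP
      constructor
      · intro h
        have hle : Subgroup.closure (insert g P) ≤ I := by
          rw [Subgroup.closure_le]
          exact Set.insert_subset hg hPI
        rw [h, top_le_iff] at hle
        exact hInetop hle
      · exact interCeil_insert_of_mem hg
    rw [gameNim_eq P hP]
    by_cases ho : Odd (Nat.card I)
    · have hle : I ≤ tA A := (odd_iff_le_tA hodd I).mp ho
      have hIcard : (↑I : Set (Dih A)).ncard = Nat.card I := card_coe I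
      have hPneI : P.ncard ≠ (↑I : Set (Dih A)).ncard → ∃ g ∈ (↑I : Set (Dih A)), g ∉ P :=
        exists_stay hPI
      by_cases hd1 : d = 1
      · -- odd, d = 1 : I = tA
        have hIA : I = tA A := odd_def_one huv hle hd1
        have hT : nimTbl P = if Even P.ncard then 2 else 1 := by
          simp only [nimTbl, ← hIdef, ← hddef]
          rw [if_pos ho, if_pos hd1]
        have htermval : ∀ g ∉ P, g ∉ (↑I : Set (Dih A)) → gameNim (insert g P) = 0 := by
          intro g hgP hgI
          apply gameNim_terminal
          rw [Hterm g]
          apply eq_top_of_lt_tA (x := g)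
          · intro y hy
            apply Subgroup.subset_closure
            apply Set.mem_insert_iff.mpr
            right
            rw [hIA]
            exact hy
          · exact Subgroup.subset_closure (Set.mem_insert _ _)
          · intro h
            exact hgI (by rw [hIA]; exact mem_tA.mpr h)
        have hstayval : ∀ g ∈ (↑I : Set (Dih A)), ∀ _ : g ∉ P,
            gameNim (insert g P) = if Even P.ncard then 1 else 2 := by
          intro g hg hgP
          obtain ⟨hnt, hIC⟩ := val_stay g hg hgP
          rw [IH _ (hstep g hgP) hnt]
          simp only [nimTbl, hIC, ← hddef]
          rw [if_pos ho, if_pos hd1]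
          by_cases hpe : Even P.ncard
          · have hne : ¬Even (insert g P).ncard := by
              rw [hflip g hgP]; exact not_not_intro hpe
            rw [if_neg hne, if_pos hpe]
          · have hev : Even (insert g P).ncard := by rw [hflip g hgP]; exact hpe
            rw [if_pos hev, if_neg hpe]
        have htZP : tZ A ∉ P := fun h => tZ_notin_tA (by rw [← hIA]; exact hPI h)
        have htZI : tZ A ∉ (↑I : Set (Dih A)) := fun h => tZ_notin_tA (by rwa [hIA] at h)
        rw [hT]
        by_cases hpe : Even P.ncard
        · rw [if_pos hpe]
          apply mex_eq
          · intro g hgP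
            by_cases hgI : g ∈ (↑I : Set (Dih A))
            · rw [hstayval g hgI hgP, if_pos hpe]; omega
            · rw [htermval g hgP hgI]; omega
          · intro k hk
            simp only [Set.mem_setOf_eq, not_forall]
            push_neg
            have hstayex : ∃ g ∈ (↑I : Set (Dih A)), g ∉ P := by
              apply hPneI
              rw [hIcard]
              intro h
              rw [h] at hpe
              exact (Nat.not_even_iff_odd.mpr ho) hpe
            interval_cases k
            · exact ⟨tZ A, htZP, (htermval _ htZP htZI).symm⟩
            · obtain ⟨g, hgI, hgP⟩ := hstayex
              exact ⟨g, hgP, by rw [hstayval g hgI hgP, if_pos hpe]⟩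
        · rw [if_neg hpe]
          apply mex_eq
          · intro g hgP
            by_cases hgI : g ∈ (↑I : Set (Dih A))
            · rw [hstayval g hgI hgP, if_neg hpe]; omega
            · rw [htermval g hgP hgI]; omega
          · intro k hk
            simp only [Set.mem_setOf_eq, not_forall]
            push_neg
            interval_cases k
            · exact ⟨tZ A, htZP, (htermval _ htZP htZI).symm⟩
      · by_cases hd2 : d = 2
        · -- odd, d = 2
          obtain ⟨a, haI, haC⟩ := odd_two_move huv hle hd2
          have hT : nimTbl P = if Even P.ncard then 3 else 0 := by
            simp only [nimTbl, ← hIdef, ← hddef]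
            rw [if_pos ho, if_neg hd1, if_pos hd2]
          have hNT : ∀ g : Dih A, Subgroup.closure (insert g P) ≠ ⊤ := by
            intro g h
            have h1 : deficiency P = 1 := deficiency_one_of hP h
            rw [hdP] at h1
            omega
          have hstayval : ∀ g ∈ (↑I : Set (Dih A)), ∀ _ : g ∉ P,
              gameNim (insert g P) = if Even P.ncard then 0 else 3 := by
            intro g hg hgP
            obtain ⟨hnt, hIC⟩ := val_stay g hg hgP
            rw [IH _ (hstep g hgP) hnt]
            simp only [nimTbl, hIC, ← hddef]
            rw [if_pos ho, if_neg hd1, if_pos hd2]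
            by_cases hpe : Even P.ncard
            · have hne : ¬Even (insert g P).ncard := by
                rw [hflip g hgP]; exact not_not_intro hpe
              rw [if_neg hne, if_pos hpe]
            · have hev : Even (insert g P).ncard := by rw [hflip g hgP]; exact hpe
              rw [if_pos hev, if_neg hpe]
          have hout : ∀ g, g ∉ P →
              deficiency (↑(interCeil (insert g P)) : Set (Dih A)) ≤ 2 ∧
              deficiency (↑(interCeil (insert g P)) : Set (Dih A)) ≠ 0 := by
            intro g hgP
            constructor
            · rw [deficiency_interCeil]
              have h1 : deficiency (insert g P) ≤ deficiency P := deficiency_insert_le P g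
              omega
            · exact def_pos (interCeil_ne_top (hNT g))
          have hrotval : ∀ g, ∀ _ : g ∉ P, g ∉ (↑I : Set (Dih A)) → g ∈ tA A →
              gameNim (insert g P) =
                (if deficiency (↑(interCeil (insert g P)) : Set (Dih A)) = 1
                  then (if Even P.ncard then 1 else 2)
                  else (if Even P.ncard then 0 else 3)) := by
            intro g hgP hgI hgA
            rw [IH _ (hstep g hgP) (hNT g)]
            have hJle : interCeil (insert g P) ≤ tA A := by
              rw [HJ g]
              apply interCeil_le_coatom tA_coatom
              rintro x (rfl | hx)
              · exact hgA
              · exact hle hx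
            have hJodd : Odd (Nat.card (interCeil (insert g P))) :=
              (odd_iff_le_tA hodd _).mpr hJle
            simp only [nimTbl]
            rw [if_pos hJodd]
            by_cases hd' : deficiency (↑(interCeil (insert g P)) : Set (Dih A)) = 1
            · rw [if_pos hd', if_pos hd']
              by_cases hpe : Even P.ncard
              · have hne : ¬Even (insert g P).ncard := by
                  rw [hflip g hgP]; exact not_not_intro hpe
                rw [if_neg hne, if_pos hpe]
              · have hev : Even (insert g P).ncard := by rw [hflip g hgP]; exact hpe
                rw [if_pos hev, if_neg hpe]
            · have hd'' : deficiency (↑(interCeil (insert g P)) : Set (Dih A)) = 2 := by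
                obtain ⟨hA, hB⟩ := hout g hgP
                omega
              rw [if_neg hd', if_neg hd', if_pos hd'']
              by_cases hpe : Even P.ncard
              · have hne : ¬Even (insert g P).ncard := by
                  rw [hflip g hgP]; exact not_not_intro hpe
                rw [if_neg hne, if_pos hpe]
              · have hev : Even (insert g P).ncard := by rw [hflip g hgP]; exact hpe
                rw [if_pos hev, if_neg hpe]
          have hreflval : ∀ g, ∀ _ : g ∉ P, g ∉ tA A →
              gameNim (insert g P) = if Even P.ncard then 2 else 1 := by
            intro g hgP hgA
            have hgr : g.right ≠ 1 := fun h => hgA (mem_tA.mpr h)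
            rw [IH _ (hstep g hgP) (hNT g)]
            have hnt' : Subgroup.closure (insert g (↑I : Set (Dih A))) ≠ ⊤ :=
              fun h => hNT g ((Hterm g).mpr h)
            have hd'1 : deficiency (↑(interCeil (insert g P)) : Set (Dih A)) = 1 := by
              rw [HJ g]
              exact odd_refl_move_def_one hle haC hgr hnt'
            have hJeven : ¬Odd (Nat.card (interCeil (insert g P))) := by
              rw [HJ g]; exact not_odd_interCeil_refl hgr
            simp only [nimTbl]
            rw [if_neg hJeven, if_pos hd'1]
            by_cases hpe : Even P.ncard
            · have hne : ¬Even (insert g P).ncard := by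
                rw [hflip g hgP]; exact not_not_intro hpe
              rw [if_neg hne, if_pos hpe]
            · have hev : Even (insert g P).ncard := by rw [hflip g hgP]; exact hpe
              rw [if_pos hev, if_neg hpe]
          rw [hT]
          by_cases hpe : Even P.ncard
          · rw [if_pos hpe]
            apply mex_eq
            · intro g hgP
              by_cases hgI : g ∈ (↑I : Set (Dih A))
              · rw [hstayval g hgI hgP, if_pos hpe]; omega
              · by_cases hgA : g ∈ tA A
                · rw [hrotval g hgP hgI hgA]
                  by_cases hd' : deficiency (↑(interCeil (insert g P)) : Set (Dih A)) = 1
                  · rw [if_pos hd', if_pos hpe]; omega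
                  · rw [if_neg hd', if_pos hpe]; omega
                · rw [hreflval g hgP hgA, if_pos hpe]; omega
            · intro k hk
              simp only [Set.mem_setOf_eq, not_forall]
              push_neg
              have hstayex : ∃ g ∈ (↑I : Set (Dih A)), g ∉ P := by
                apply hPneI
                rw [hIcard]
                intro h
                rw [h] at hpe
                exact (Nat.not_even_iff_odd.mpr ho) hpe
              have haP : DihInl A a ∉ P := fun h => haI (hPI h)
              have haI' : DihInl A a ∉ (↑I : Set (Dih A)) := haI
              have htZP : tZ A ∉ P := fun h => tZ_notin_tA (hle (hPI h))
              interval_cases k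
              · obtain ⟨g, hgI, hgP⟩ := hstayex
                exact ⟨g, hgP, by rw [hstayval g hgI hgP, if_pos hpe]⟩
              · refine ⟨DihInl A a, haP, ?_⟩
                rw [hrotval _ haP haI' (rot_mem_tA a)]
                have hJtA : interCeil (insert (DihInl A a) P) = tA A := by
                  rw [HJ]; exact rot_move_to_tA hle haC
                have hd' : deficiency (↑(interCeil (insert (DihInl A a) P)) : Set (Dih A)) = 1 := by
                  rw [hJtA]; exact def_tA
                rw [if_pos hd', if_pos hpe]
              · refine ⟨tZ A, htZP, ?_⟩
                rw [hreflval _ htZP tZ_notin_tA, if_pos hpe]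
          · rw [if_neg hpe]
            apply mex_eq
            · intro g hgP
              by_cases hgI : g ∈ (↑I : Set (Dih A))
              · rw [hstayval g hgI hgP, if_neg hpe]; omega
              · by_cases hgA : g ∈ tA A
                · rw [hrotval g hgP hgI hgA]
                  by_cases hd' : deficiency (↑(interCeil (insert g P)) : Set (Dih A)) = 1
                  · rw [if_pos hd', if_neg hpe]; omega
                  · rw [if_neg hd', if_neg hpe]; omega
                · rw [hreflval g hgP hgA, if_neg hpe]; omega
            · intro k hk
              exact absurd hk (Nat.not_lt_zero k)
        · -- odd, d = 3
          have hd3' : deficiency ((I : Subgroup (Dih A)) : Set (Dih A)) = 3 := by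
            rw [← hddef]; omega
          obtain ⟨huI, hJleU, hJd2U⟩ := odd_three_umove huv hle hd3'
          have hT : nimTbl P = if Even P.ncard then 3 else 1 := by
            simp only [nimTbl, ← hIdef, ← hddef]
            rw [if_pos ho, if_neg hd1, if_neg hd2]
          have hNT : ∀ g : Dih A, Subgroup.closure (insert g P) ≠ ⊤ := by
            intro g h
            have h1 : deficiency P = 1 := deficiency_one_of hP h
            rw [hdP] at h1
            omega
          have hge : ∀ g : Dih A,
              d ≤ deficiency (↑(interCeil (insert g P)) : Set (Dih A)) + 1 := by
            intro g
            rw [deficiency_interCeil]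
            have h1 := deficiency_le_insert P g
            omega
          have hstayval : ∀ g ∈ (↑I : Set (Dih A)), ∀ _ : g ∉ P,
              gameNim (insert g P) = if Even P.ncard then 1 else 3 := by
            intro g hg hgP
            obtain ⟨hnt, hIC⟩ := val_stay g hg hgP
            rw [IH _ (hstep g hgP) hnt]
            simp only [nimTbl, hIC, ← hddef]
            rw [if_pos ho, if_neg hd1, if_neg hd2]
            by_cases hpe : Even P.ncard
            · have hne : ¬Even (insert g P).ncard := by
                rw [hflip g hgP]; exact not_not_intro hpe
              rw [if_neg hne, if_pos hpe]
            · have hev : Even (insert g P).ncard := by rw [hflip g hgP]; exact hpe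
              rw [if_pos hev, if_neg hpe]
          have hrotval : ∀ g, ∀ _ : g ∉ P, g ∉ (↑I : Set (Dih A)) → g ∈ tA A →
              gameNim (insert g P) =
                (if deficiency (↑(interCeil (insert g P)) : Set (Dih A)) = 2
                  then (if Even P.ncard then 0 else 3)
                  else (if Even P.ncard then 1 else 3)) := by
            intro g hgP hgI hgA
            rw [IH _ (hstep g hgP) (hNT g)]
            have hJle : interCeil (insert g P) ≤ tA A := by
              rw [HJ g]
              apply interCeil_le_coatom tA_coatom
              rintro x (rfl | hx)
              · exact hgA
              · exact hle hx
            have hJodd : Odd (Nat.card (interCeil (insert g P))) :=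
              (odd_iff_le_tA hodd _).mpr hJle
            have hd'ne1 : deficiency (↑(interCeil (insert g P)) : Set (Dih A)) ≠ 1 := by
              have h1 := hge g
              omega
            simp only [nimTbl]
            rw [if_pos hJodd, if_neg hd'ne1]
            by_cases hd' : deficiency (↑(interCeil (insert g P)) : Set (Dih A)) = 2
            · rw [if_pos hd', if_pos hd']
              by_cases hpe : Even P.ncard
              · have hne : ¬Even (insert g P).ncard := by
                  rw [hflip g hgP]; exact not_not_intro hpe
                rw [if_neg hne, if_pos hpe]
              · have hev : Even (insert g P).ncard := by rw [hflip g hgP]; exact hpe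
                rw [if_pos hev, if_neg hpe]
            · rw [if_neg hd', if_neg hd']
              by_cases hpe : Even P.ncard
              · have hne : ¬Even (insert g P).ncard := by
                  rw [hflip g hgP]; exact not_not_intro hpe
                rw [if_neg hne, if_pos hpe]
              · have hev : Even (insert g P).ncard := by rw [hflip g hgP]; exact hpe
                rw [if_pos hev, if_neg hpe]
          have hreflval : ∀ g, ∀ _ : g ∉ P, g ∉ tA A →
              gameNim (insert g P) = if Even P.ncard then 2 else 0 := by
            intro g hgP hgA
            have hgr : g.right ≠ 1 := fun h => hgA (mem_tA.mpr h)
            rw [IH _ (hstep g hgP) (hNT g)]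
            have hgJ : g ∈ interCeil (insert g P) := mem_interCeil_insert P g
            have hd'2 : deficiency (↑(interCeil (insert g P)) : Set (Dih A)) = 2 := by
              have h1 := hge g
              have h2 : deficiency (↑(interCeil (insert g P)) : Set (Dih A)) ≤ 2 :=
                def_le_two_of_refl huv hgJ hgr
              omega
            have hJeven : ¬Odd (Nat.card (interCeil (insert g P))) := by
              rw [HJ g]; exact not_odd_interCeil_refl hgr
            have hd'ne1 : deficiency (↑(interCeil (insert g P)) : Set (Dih A)) ≠ 1 := by omega
            simp only [nimTbl]
            rw [if_neg hJeven, if_neg hd'ne1]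
            by_cases hpe : Even P.ncard
            · have hne : ¬Even (insert g P).ncard := by
                rw [hflip g hgP]; exact not_not_intro hpe
              rw [if_neg hne, if_pos hpe]
            · have hev : Even (insert g P).ncard := by rw [hflip g hgP]; exact hpe
              rw [if_pos hev, if_neg hpe]
          have huP : DihInl A u ∉ P := fun h => huI (hPI h)
          have huI' : DihInl A u ∉ (↑I : Set (Dih A)) := huI
          have htZP : tZ A ∉ P := fun h => tZ_notin_tA (hle (hPI h))
          rw [hT]
          by_cases hpe : Even P.ncard
          · rw [if_pos hpe]
            apply mex_eq
            · intro g hgP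
              by_cases hgI : g ∈ (↑I : Set (Dih A))
              · rw [hstayval g hgI hgP, if_pos hpe]; omega
              · by_cases hgA : g ∈ tA A
                · rw [hrotval g hgP hgI hgA]
                  by_cases hd' : deficiency (↑(interCeil (insert g P)) : Set (Dih A)) = 2
                  · rw [if_pos hd', if_pos hpe]; omega
                  · rw [if_neg hd', if_pos hpe]; omega
                · rw [hreflval g hgP hgA, if_pos hpe]; omega
            · intro k hk
              simp only [Set.mem_setOf_eq, not_forall]
              push_neg
              have hstayex : ∃ g ∈ (↑I : Set (Dih A)), g ∉ P := by
                apply hPneI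
                rw [hIcard]
                intro h
                rw [h] at hpe
                exact (Nat.not_even_iff_odd.mpr ho) hpe
              interval_cases k
              · refine ⟨DihInl A u, huP, ?_⟩
                rw [hrotval _ huP huI' (rot_mem_tA u)]
                have hd' : deficiency (↑(interCeil (insert (DihInl A u) P)) : Set (Dih A)) = 2 := by
                  rw [HJ]; exact hJd2U
                rw [if_pos hd', if_pos hpe]
              · obtain ⟨g, hgI, hgP⟩ := hstayex
                exact ⟨g, hgP, by rw [hstayval g hgI hgP, if_pos hpe]⟩
              · refine ⟨tZ A, htZP, ?_⟩
                rw [hreflval _ htZP tZ_notin_tA, if_pos hpe]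
          · rw [if_neg hpe]
            apply mex_eq
            · intro g hgP
              by_cases hgI : g ∈ (↑I : Set (Dih A))
              · rw [hstayval g hgI hgP, if_neg hpe]; omega
              · by_cases hgA : g ∈ tA A
                · rw [hrotval g hgP hgI hgA]
                  by_cases hd' : deficiency (↑(interCeil (insert g P)) : Set (Dih A)) = 2
                  · rw [if_pos hd', if_neg hpe]; omega
                  · rw [if_neg hd', if_neg hpe]; omega
                · rw [hreflval g hgP hgA, if_neg hpe]; omega
            · intro k hk
              simp only [Set.mem_setOf_eq, not_forall]
              push_neg
              interval_cases k
              · refine ⟨tZ A, htZP, ?_⟩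
                rw [hreflval _ htZP tZ_notin_tA, if_neg hpe]
    · obtain ⟨r, hrI, hrr⟩ := exists_refl_of_not_odd hodd ho
      have hd2' : d ≤ 2 := def_le_two_of_refl huv hrI hrr
      have hIcard' : (↑I : Set (Dih A)).ncard = Nat.card I := card_coe I
      by_cases hd1 : d = 1
      · -- even, d = 1
        obtain ⟨Q, hQc, hQtop⟩ := deficiency_exists ((I : Subgroup (Dih A)) : Set (Dih A))
        rw [← hddef, hd1] at hQc
        obtain ⟨h0, hh0⟩ := Finset.card_eq_one.mp hQc
        rw [hh0] at hQtop
        have hterm0 : Subgroup.closure (insert h0 (↑I : Set (Dih A))) = ⊤ := by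
          rwa [Finset.coe_singleton, Set.union_singleton] at hQtop
        have hh0I : h0 ∉ (↑I : Set (Dih A)) := by
          intro h
          rw [Set.insert_eq_self.mpr h, Subgroup.closure_eq] at hterm0
          exact hInetop hterm0
        have hh0P : h0 ∉ P := fun h => hh0I (hPI h)
        have hval0 : gameNim (insert h0 P) = 0 :=
          gameNim_terminal _ ((Hterm h0).mpr hterm0)
        have hT : nimTbl P = if Even P.ncard then 1 else 2 := by
          simp only [nimTbl, ← hIdef, ← hddef]
          rw [if_neg ho, if_pos hd1]
        have hstayval : ∀ g ∈ (↑I : Set (Dih A)), ∀ _ : g ∉ P,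
            gameNim (insert g P) = if Even P.ncard then 2 else 1 := by
          intro g hg hgP
          obtain ⟨hnt, hIC⟩ := val_stay g hg hgP
          rw [IH _ (hstep g hgP) hnt]
          simp only [nimTbl, hIC, ← hddef]
          rw [if_neg ho, if_pos hd1]
          by_cases hpe : Even P.ncard
          · have hne : ¬Even (insert g P).ncard := by
              rw [hflip g hgP]; exact not_not_intro hpe
            rw [if_neg hne, if_pos hpe]
          · have hev : Even (insert g P).ncard := by rw [hflip g hgP]; exact hpe
            rw [if_pos hev, if_neg hpe]
        have houtval : ∀ g, ∀ _ : g ∉ P, Subgroup.closure (insert g P) ≠ ⊤ →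
            gameNim (insert g P) = if Even P.ncard then 2 else 1 := by
          intro g hgP hnt
          rw [IH _ (hstep g hgP) hnt]
          have hJeven : ¬Odd (Nat.card (interCeil (insert g P))) := by
            have h1 := even_card_of_refl (HIJ g hrI) hrr
            rw [Nat.odd_iff]
            omega
          have hd'1 : deficiency (↑(interCeil (insert g P)) : Set (Dih A)) = 1 := by
            have h1 : deficiency (↑(interCeil (insert g P)) : Set (Dih A)) ≤ 1 := by
              rw [deficiency_interCeil]
              have h2 := deficiency_insert_le P g
              omega
            have h2 : deficiency (↑(interCeil (insert g P)) : Set (Dih A)) ≠ 0 :=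
              def_pos (interCeil_ne_top hnt)
            omega
          simp only [nimTbl]
          rw [if_neg hJeven, if_pos hd'1]
          by_cases hpe : Even P.ncard
          · have hne : ¬Even (insert g P).ncard := by
              rw [hflip g hgP]; exact not_not_intro hpe
            rw [if_neg hne, if_pos hpe]
          · have hev : Even (insert g P).ncard := by rw [hflip g hgP]; exact hpe
            rw [if_pos hev, if_neg hpe]
        rw [hT]
        by_cases hpe : Even P.ncard
        · rw [if_pos hpe]
          apply mex_eq
          · intro g hgP
            by_cases hterm : Subgroup.closure (insert g P) = ⊤
            · rw [gameNim_terminal _ hterm]; omega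
            · by_cases hgI : g ∈ (↑I : Set (Dih A))
              · rw [hstayval g hgI hgP, if_pos hpe]; omega
              · rw [houtval g hgP hterm, if_pos hpe]; omega
          · intro k hk
            simp only [Set.mem_setOf_eq, not_forall]
            push_neg
            interval_cases k
            · exact ⟨h0, hh0P, hval0.symm⟩
        · rw [if_neg hpe]
          apply mex_eq
          · intro g hgP
            by_cases hterm : Subgroup.closure (insert g P) = ⊤
            · rw [gameNim_terminal _ hterm]; omega
            · by_cases hgI : g ∈ (↑I : Set (Dih A))
              · rw [hstayval g hgI hgP, if_neg hpe]; omega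
              · rw [houtval g hgP hterm, if_neg hpe]; omega
          · intro k hk
            simp only [Set.mem_setOf_eq, not_forall]
            push_neg
            have hstayex : ∃ g ∈ (↑I : Set (Dih A)), g ∉ P := by
              apply exists_stay hPI
              rw [hIcard']
              intro h
              rw [h] at hpe
              exact hpe (Nat.not_odd_iff_even.mp ho)
            interval_cases k
            · exact ⟨h0, hh0P, hval0.symm⟩
            · obtain ⟨g, hgI, hgP⟩ := hstayex
              exact ⟨g, hgP, by rw [hstayval g hgI hgP, if_neg hpe]⟩
      · -- even, d = 2
        have hd2 : d = 2 := by omega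
        have hd2'' : deficiency ((I : Subgroup (Dih A)) : Set (Dih A)) = 2 := by
          rw [← hddef]; exact hd2
        obtain ⟨huI, hntU, hJ1U⟩ := even_two_umove huv hrI hrr hd2''
        have hT : nimTbl P = if Even P.ncard then 0 else 2 := by
          simp only [nimTbl, ← hIdef, ← hddef]
          rw [if_neg ho, if_neg hd1]
        have hNT : ∀ g : Dih A, Subgroup.closure (insert g P) ≠ ⊤ := by
          intro g h
          have h1 : deficiency P = 1 := deficiency_one_of hP h
          rw [hdP] at h1
          omega
        have hstayval : ∀ g ∈ (↑I : Set (Dih A)), ∀ _ : g ∉ P,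
            gameNim (insert g P) = if Even P.ncard then 2 else 0 := by
          intro g hg hgP
          obtain ⟨hnt, hIC⟩ := val_stay g hg hgP
          rw [IH _ (hstep g hgP) hnt]
          simp only [nimTbl, hIC, ← hddef]
          rw [if_neg ho, if_neg hd1]
          by_cases hpe : Even P.ncard
          · have hne : ¬Even (insert g P).ncard := by
              rw [hflip g hgP]; exact not_not_intro hpe
            rw [if_neg hne, if_pos hpe]
          · have hev : Even (insert g P).ncard := by rw [hflip g hgP]; exact hpe
            rw [if_pos hev, if_neg hpe]
        have houtval : ∀ g, ∀ _ : g ∉ P,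
            gameNim (insert g P) =
              (if deficiency (↑(interCeil (insert g P)) : Set (Dih A)) = 1
                then (if Even P.ncard then 2 else 1)
                else (if Even P.ncard then 2 else 0)) := by
          intro g hgP
          rw [IH _ (hstep g hgP) (hNT g)]
          have hJeven : ¬Odd (Nat.card (interCeil (insert g P))) := by
            have h1 := even_card_of_refl (HIJ g hrI) hrr
            rw [Nat.odd_iff]
            omega
          simp only [nimTbl]
          rw [if_neg hJeven]
          by_cases hd' : deficiency (↑(interCeil (insert g P)) : Set (Dih A)) = 1
          · rw [if_pos hd', if_pos hd']
            by_cases hpe : Even P.ncard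
            · have hne : ¬Even (insert g P).ncard := by
                rw [hflip g hgP]; exact not_not_intro hpe
              rw [if_neg hne, if_pos hpe]
            · have hev : Even (insert g P).ncard := by rw [hflip g hgP]; exact hpe
              rw [if_pos hev, if_neg hpe]
          · rw [if_neg hd', if_neg hd']
            by_cases hpe : Even P.ncard
            · have hne : ¬Even (insert g P).ncard := by
                rw [hflip g hgP]; exact not_not_intro hpe
              rw [if_neg hne, if_pos hpe]
            · have hev : Even (insert g P).ncard := by rw [hflip g hgP]; exact hpe
              rw [if_pos hev, if_neg hpe]
        rw [hT]
        by_cases hpe : Even P.ncard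
        · rw [if_pos hpe]
          apply mex_eq
          · intro g hgP
            by_cases hgI : g ∈ (↑I : Set (Dih A))
            · rw [hstayval g hgI hgP, if_pos hpe]; omega
            · rw [houtval g hgP]
              by_cases hd' : deficiency (↑(interCeil (insert g P)) : Set (Dih A)) = 1
              · rw [if_pos hd', if_pos hpe]; omega
              · rw [if_neg hd', if_pos hpe]; omega
          · intro k hk
            exact absurd hk (Nat.not_lt_zero k)
        · rw [if_neg hpe]
          apply mex_eq
          · intro g hgP
            by_cases hgI : g ∈ (↑I : Set (Dih A))
            · rw [hstayval g hgI hgP, if_neg hpe]; omega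
            · rw [houtval g hgP]
              by_cases hd' : deficiency (↑(interCeil (insert g P)) : Set (Dih A)) = 1
              · rw [if_pos hd', if_neg hpe]; omega
              · rw [if_neg hd', if_neg hpe]; omega
          · intro k hk
            simp only [Set.mem_setOf_eq, not_forall]
            push_neg
            have hstayex : ∃ g ∈ (↑I : Set (Dih A)), g ∉ P := by
              apply exists_stay hPI
              rw [hIcard']
              intro h
              rw [h] at hpe
              exact hpe (Nat.not_odd_iff_even.mp ho)
            have huP : DihInl A u ∉ P := fun h => huI (hPI h)
            have huI' : DihInl A u ∉ (↑I : Set (Dih A)) := huI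
            interval_cases k
            · obtain ⟨g, hgI, hgP⟩ := hstayex
              exact ⟨g, hgP, by rw [hstayval g hgI hgP, if_neg hpe]⟩
            · refine ⟨DihInl A u, huP, ?_⟩
              rw [houtval _ huP]
              have hd' : deficiency (↑(interCeil (insert (DihInl A u) P)) : Set (Dih A)) = 1 := by
                rw [HJ]; exact hJ1U
              rw [if_pos hd', if_neg hpe]

end DihAux
/-- Let `G = Dih(A)` with `A` a finite abelian group of odd order and
`d(A) = 2`, and let `P` be a non-generating position whose smallest containing
intersection subgroup `I = ⌈P⌉` has odd order. If `δ(I) = 1` then `nim(P)` is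
`2`/`1` according as `|P|` is even/odd; if `δ(I) = 2` then `nim(P)` is `3`/`0`;
and if `δ(I) = 3` then `nim(P)` is `3`/`1`. -/
theorem gameNim_dih_odd_structure_classes (A : Type*) [CommGroup A] [Fintype A]
    (hodd : Odd (Nat.card A)) (hd : minGen A = 2)
    (P : Set (Dih A)) (hP : Subgroup.closure P ≠ ⊤)
    (I : Subgroup (Dih A)) (hIdef : I = interCeil P) (hIodd : Odd (Nat.card I)) :
    (deficiency (I : Set (Dih A)) = 1 →
      gameNim P = if Even P.ncard then 2 else 1) ∧
    (deficiency (I : Set (Dih A)) = 2 →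
      gameNim P = if Even P.ncard then 3 else 0) ∧
    (deficiency (I : Set (Dih A)) = 3 →
      gameNim P = if Even P.ncard then 3 else 1) := by
  classical
  subst hIdef
  -- extract a generating pair of A
  have h2 : 2 ∈ {n : ℕ | ∃ S : Finset A, S.card = n ∧ Subgroup.closure (S : Set A) = ⊤} := by
    rw [← hd]
    apply Nat.sInf_mem
    refine ⟨(Finset.univ : Finset A).card, Finset.univ, rfl, ?_⟩
    rw [Finset.coe_univ, Subgroup.closure_univ]
  obtain ⟨S, hS2, hStop⟩ := h2
  obtain ⟨u, v, _, hSuv⟩ := Finset.card_eq_two.mp hS2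
  have huv : Subgroup.closure ({u, v} : Set A) = ⊤ := by
    rw [hSuv] at hStop
    rwa [Finset.coe_insert, Finset.coe_singleton] at hStop
  have hmain := DihAux.master hodd huv (Fintype.card (Dih A)) P (by omega) hP
  refine ⟨?_, ?_, ?_⟩ <;> intro hdef <;> rw [hmain] <;> simp only [DihAux.nimTbl]
  · rw [if_pos hIodd, if_pos hdef]
  · rw [if_pos hIodd, if_neg (by omega : ¬ deficiency ((interCeil P : Subgroup (Dih A)) : Set (Dih A)) = 1), if_pos hdef]
  · rw [if_pos hIodd,
      if_neg (by omega : ¬ deficiency ((interCeil P : Subgroup (Dih A)) : Set (Dih A)) = 1),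
      if_neg (by omega : ¬ deficiency ((interCeil P : Subgroup (Dih A)) : Set (Dih A)) = 2)]
end

section
/- Let G be a finite group of even order, let I be an intersection subgroup of G of even order, and let m = δ(I) with m ≥ 1. Then there exists g ∈ G with δ(I ∪ {g}) = m − 1, and for every g ∈ G one has δ(I ∪ {g}) ∈ {m − 1, m}; moreover, for every g ∈ G such that I ∪ {g} does not generate G, the smallest intersection subgroup ⌈I ∪ {g}⌉ containing I ∪ {g} has even order. -/
lemma defSet_nonempty {G : Type*} [Group G] [Fintype G] (P : Set G) :
    {n : ℕ | ∃ Q : Finset G, Q.card = n ∧ Subgroup.closure (P ∪ ↑Q) = ⊤}.Nonempty := by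
  refine ⟨(Finset.univ : Finset G).card, Finset.univ, rfl, ?_⟩
  rw [Finset.coe_univ, Set.union_univ, Subgroup.closure_univ]

lemma deficiency_mono {G : Type*} [Group G] [Fintype G] {P P' : Set G} (h : P ⊆ P') :
    deficiency P' ≤ deficiency P := by
  obtain ⟨Q, hQ, hcl⟩ := Nat.sInf_mem (defSet_nonempty P)
  exact Nat.sInf_le ⟨Q, hQ, top_le_iff.mp (hcl ▸ Subgroup.closure_mono
    (Set.union_subset_union_left _ h))⟩

/-- If `I` is an intersection subgroup of even order of a finite group `G` of
even order, with `δ(I) = m ≥ 1`, then some `g ∈ G` satisfies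
`δ(I ∪ {g}) = m - 1`; every `g ∈ G` satisfies `δ(I ∪ {g}) ∈ {m - 1, m}`; and
for every `g` such that `I ∪ {g}` does not generate `G`, the smallest
intersection subgroup `⌈I ∪ {g}⌉` has even order. -/
theorem deficiency_insert_even (G : Type*) [Group G] [Fintype G]
    (hG : Even (Nat.card G))
    (I : Subgroup G) (hI : IsIntersectionSubgroup I) (hIeven : Even (Nat.card I))
    (m : ℕ) (hm : deficiency (I : Set G) = m) (hm1 : 1 ≤ m) :
    (∃ g : G, deficiency (insert g (I : Set G)) = m - 1) ∧
    (∀ g : G, deficiency (insert g (I : Set G)) = m - 1 ∨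
      deficiency (insert g (I : Set G)) = m) ∧
    (∀ g : G, Subgroup.closure (insert g (I : Set G)) ≠ ⊤ →
      Even (Nat.card (interCeil (insert g (I : Set G))))) := by
  haveI := Classical.decEq G
  have key : ∀ g : G, deficiency (I : Set G) ≤ deficiency (insert g (I : Set G)) + 1 := by
    intro g
    obtain ⟨Q, hQ, hcl⟩ := Nat.sInf_mem (defSet_nonempty (insert g (I : Set G)))
    have hQ : Q.card = deficiency (insert g (I : Set G)) := hQ
    have : ((I : Set G) ∪ ↑(insert g Q)) = insert g (I : Set G) ∪ ↑Q := by
      simp [Set.union_insert, Set.insert_union]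
    have hmem : Subgroup.closure ((I : Set G) ∪ ↑(insert g Q)) = ⊤ := by
      rw [this]; exact hcl
    calc deficiency (I : Set G) ≤ (insert g Q).card := Nat.sInf_le ⟨insert g Q, rfl, hmem⟩
      _ ≤ Q.card + 1 := Finset.card_insert_le _ _
      _ = deficiency (insert g (I : Set G)) + 1 := by rw [hQ]
  refine ⟨?_, ?_, ?_⟩
  · obtain ⟨Q, hQ, hcl⟩ := Nat.sInf_mem (defSet_nonempty (I : Set G))
    have hQ : Q.card = m := by rw [show Q.card = deficiency (I : Set G) from hQ, hm]
    have hne : Q.Nonempty := Finset.card_pos.mp (by omega)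
    obtain ⟨g, hg⟩ := hne
    refine ⟨g, le_antisymm ?_ ?_⟩
    · refine Nat.sInf_le ⟨Q.erase g, by rw [Finset.card_erase_of_mem hg, hQ], ?_⟩
      refine top_le_iff.mp (hcl ▸ Subgroup.closure_mono ?_)
      intro x hx
      rcases hx with hx | hx
      · exact Or.inl (Set.mem_insert_of_mem _ hx)
      · rcases eq_or_ne x g with rfl | hxg
        · exact Or.inl (Set.mem_insert _ _)
        · exact Or.inr (Finset.mem_coe.mpr (Finset.mem_erase.mpr ⟨hxg, hx⟩))
    · have := key g; omega
  · intro g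
    have h1 := key g
    have h2 : deficiency (insert g (I : Set G)) ≤ m :=
      hm ▸ deficiency_mono (Set.subset_insert _ _)
    omega
  · intro g hgen
    have hle : I ≤ interCeil (insert g (I : Set G)) := by
      apply le_sInf
      rintro M ⟨hM, hsub⟩
      exact fun x hx => hsub (Set.mem_insert_of_mem _ hx)
    obtain ⟨k, hk⟩ := hIeven
    have := Subgroup.card_dvd_of_le hle
    exact (even_iff_two_dvd).mpr (dvd_trans (by omega : (2:ℕ) ∣ Nat.card I) this)
end
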